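/- arXiv:2201.13017 — 3 statements merged into one kernel-verified Lean document; each statement's English description precedes it below -/
import Mathlib

section
/- Let Γ be a finite, compact, connected metric graph carrying local self-adjoint vertex conditions at every vertex except v₀, where a δ' condition of strength α'₀ ≠ 0 is imposed. Let Γ̃ be the same graph with the strength at v₀ changed to α̃'₀ ≠ 0, and let Γ₀ be the same graph with the anti-standard condition imposed at v₀ instead. If either 0 < α'₀ < α̃'₀ or α'₀ < α̃'₀ < 0, then for every k ≥ 1: λ_k(Γ̃) ≤ λ_k(Γ) ≤ λ_k(Γ₀) ≤ λ_{k+1}(Γ̃). -/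
noncomputable section
open scoped Classical
open MeasureTheory Finset

/-- A finite metric graph: finitely many edges, each identified with an interval
`[0, ℓ e]` of positive length, whose two endpoints `(e, false)` (left) and `(e, true)`
(right) are attached to vertices via `ends`. -/
structure MetricGraph where
  E : Type
  V : Type
  fintE : Fintype E
  fintV : Fintype V
  nonemptyE : Nonempty E
  ℓ : E → ℝ
  ℓ_pos : ∀ e, 0 < ℓ e
  ends : E × Bool → V

namespace MetricGraph

instance (G : MetricGraph) : Fintype G.E := G.fintE
instance (G : MetricGraph) : Fintype G.V := G.fintV
instance (G : MetricGraph) : Nonempty G.E := G.nonemptyE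

/-- The set of edge endpoints attached to the vertex `v`. -/
def Endpts (G : MetricGraph) (v : G.V) : Type := {p : G.E × Bool // G.ends p = v}

instance (G : MetricGraph) (v : G.V) : Fintype (G.Endpts v) := Subtype.fintype _

/-- The degree of a vertex: the number of edge endpoints attached to it. -/
def degree (G : MetricGraph) (v : G.V) : ℕ := Fintype.card (G.Endpts v)

/-- Two vertices are adjacent if some edge runs between them. -/
def Adj (G : MetricGraph) (v w : G.V) : Prop :=
  ∃ p : G.E × Bool, G.ends p = v ∧ G.ends (p.1, !p.2) = w

/-- Connectedness of the metric graph. -/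
def Connected (G : MetricGraph) : Prop :=
  ∀ v w : G.V, Relation.ReflTransGen G.Adj v w

/-- Total length of the metric graph. -/
def totalLength (G : MetricGraph) : ℝ := ∑ e, G.ℓ e

/-- Real-valued first Betti number `|E| - |V| + 1`. -/
def bettiR (G : MetricGraph) : ℝ :=
  (Fintype.card G.E : ℝ) - (Fintype.card G.V : ℝ) + 1

/-- Value of an edgewise function at an edge endpoint. -/
def endVal (G : MetricGraph) (f : G.E → ℝ → ℂ) (p : G.E × Bool) : ℂ :=
  f p.1 (if p.2 then G.ℓ p.1 else 0)

/-- The tuple of endpoint values of `f` at the vertex `v`. -/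
def vals (G : MetricGraph) (f : G.E → ℝ → ℂ) (v : G.V) : G.Endpts v → ℂ :=
  fun p => G.endVal f p.1

end MetricGraph

/-- `g` is an `L²` weak derivative of `f` on `[0, L]`: `g` is square integrable on `(0, L]`
and `f` is its integral function on `[0, L]`.  This is the standard description of
membership of `f` in the Sobolev space `H¹(0, L)`. -/
def IsH1Deriv (f g : ℝ → ℂ) (L : ℝ) : Prop :=
  MeasureTheory.MemLp g 2 (MeasureTheory.volume.restrict (Set.Ioc (0:ℝ) L)) ∧
    ∀ x ∈ Set.Icc (0:ℝ) L, f x = f 0 + ∫ t in (0:ℝ)..x, g t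

/-- `f` belongs to the Sobolev space `H¹(0, L)`. -/
def IsH1 (f : ℝ → ℂ) (L : ℝ) : Prop := ∃ g, IsH1Deriv f g L

/-- The Dirichlet energy `∫₀ᴸ |f′|²` of `f` on `[0, L]` (defined via any `L²` weak
derivative of `f`; all of them give the same integral). -/
def edgeEnergy (f : ℝ → ℂ) (L : ℝ) : ℝ :=
  sInf { r | ∃ g, IsH1Deriv f g L ∧ r = ∫ t in (0:ℝ)..L, ‖g t‖ ^ 2 }

namespace MetricGraph

/-- The Dirichlet energy `Σ_e ∫ |f_e′|²` of an edgewise function on the graph. -/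
def energy (G : MetricGraph) (f : G.E → ℝ → ℂ) : ℝ := ∑ e, edgeEnergy (f e) (G.ℓ e)

/-- The squared `L²`-norm `Σ_e ∫ |f_e|²` of an edgewise function on the graph. -/
def normSq (G : MetricGraph) (f : G.E → ℝ → ℂ) : ℝ :=
  ∑ e, ∫ t in (0:ℝ)..(G.ℓ e), ‖f e t‖ ^ 2

end MetricGraph

/-- A real-valued function of complex vectors is a Hermitian quadratic form if it is the
diagonal of some Hermitian sesquilinear form. -/
def IsHermitianQuadratic {n : Type} [Fintype n] (Q : (n → ℂ) → ℝ) : Prop :=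
  ∃ B : (n → ℂ) → (n → ℂ) → ℂ,
    (∀ x y z, B (x + y) z = B x z + B y z) ∧
    (∀ (c : ℂ) (x y), B (c • x) y = (starRingEnd ℂ) c * B x y) ∧
    (∀ x y, B x y = (starRingEnd ℂ) (B y x)) ∧
    (∀ x, (B x x).re = Q x)

lemma isHermitianQuadratic_zero {n : Type} [Fintype n] :
    IsHermitianQuadratic (fun _ : n → ℂ => (0:ℝ)) :=
  ⟨fun _ _ => 0, by simp, by simp, by simp, by simp⟩

lemma isHermitianQuadratic_mul_normSq_sum {n : Type} [Fintype n] (c : ℝ) :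
    IsHermitianQuadratic (fun x : n → ℂ => c * ‖∑ p, x p‖ ^ 2) := by
  refine ⟨fun x y => (c : ℂ) * (starRingEnd ℂ (∑ p, x p)) * (∑ p, y p), ?_, ?_, ?_, ?_⟩
  · intro x y z
    simp only [Pi.add_apply, Finset.sum_add_distrib, map_add]
    ring
  · intro a x y
    simp only [Pi.smul_apply, smul_eq_mul, ← Finset.mul_sum, map_mul]
    ring
  · intro x y
    simp only [map_mul, Complex.conj_conj, Complex.conj_ofReal]
    ring
  · intro x
    have h : (starRingEnd ℂ) (∑ p, x p) * (∑ p, x p) = ((‖∑ p, x p‖ ^ 2 : ℝ) : ℂ) := by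
      rw [Complex.conj_mul']
      norm_cast
    show ((c : ℂ) * (starRingEnd ℂ) (∑ p, x p) * (∑ p, x p)).re = c * ‖∑ p, x p‖ ^ 2
    rw [mul_assoc, h, ← Complex.ofReal_mul, Complex.ofReal_re]

/-- Local self-adjoint vertex conditions (in form sense) at a vertex whose endpoint set
is `n`: a subspace of allowed boundary values together with a Hermitian quadratic form. -/
structure LocalCond (n : Type) [Fintype n] where
  W : Submodule ℂ (n → ℂ)
  Q : (n → ℂ) → ℝ
  herm : IsHermitianQuadratic Q

/-- Summation of boundary values as a linear functional. -/
def sumFun (n : Type) [Fintype n] : (n → ℂ) →ₗ[ℂ] ℂ where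
  toFun x := ∑ p, x p
  map_add' x y := by simp [Finset.sum_add_distrib]
  map_smul' c x := by simp [Finset.mul_sum]

/-- Anti-standard (anti-Kirchhoff) condition: the boundary values sum to zero,
no form contribution. -/
def antiStdCond (n : Type) [Fintype n] : LocalCond n :=
  ⟨LinearMap.ker (sumFun n), fun _ => 0, isHermitianQuadratic_zero⟩

/-- Neumann condition: boundary values unrestricted, no form contribution. -/
def neumannCond (n : Type) [Fintype n] : LocalCond n :=
  ⟨⊤, fun _ => 0, isHermitianQuadratic_zero⟩

/-- Dirichlet condition: all boundary values vanish. -/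
def dirichletCond (n : Type) [Fintype n] : LocalCond n :=
  ⟨⊥, fun _ => 0, isHermitianQuadratic_zero⟩

/-- δ′ condition of (nonzero) strength `α`: boundary values unrestricted, the vertex
contributes `(1/α)|Σ φ(x_i)|²` to the form. -/
def delta'Cond (n : Type) [Fintype n] (α : ℝ) : LocalCond n :=
  ⟨⊤, fun x => (1 / α) * ‖∑ p, x p‖ ^ 2, isHermitianQuadratic_mul_normSq_sum _⟩

/-- Generalized δ′ condition of strength `α ∈ ℝ`: the δ′ condition if `α ≠ 0` and the
anti-standard condition if `α = 0`. -/
def genDelta'Cond (n : Type) [Fintype n] (α : ℝ) : LocalCond n :=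
  if α = 0 then antiStdCond n else delta'Cond n α

/-- The subspace of constant tuples (continuity at the vertex). -/
def contSubmodule (n : Type) [Fintype n] : Submodule ℂ (n → ℂ) where
  carrier := {x | ∀ p q : n, x p = x q}
  add_mem' := by
    intro a b ha hb p q
    simp only [Pi.add_apply, ha p q, hb p q]
  zero_mem' := by intro p q; rfl
  smul_mem' := by
    intro c x hx p q
    simp only [Pi.smul_apply, hx p q]

/-- δ condition of strength `α`: continuity at the vertex, contributing `α|φ(v)|²` to the
form; on continuous boundary tuples `α|φ(v)|² = (α/d²)|Σ φ(x_i)|²` where `d` is the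
degree of the vertex. -/
def deltaCond (n : Type) [Fintype n] (α : ℝ) : LocalCond n :=
  ⟨contSubmodule n, fun x => (α / (Fintype.card n : ℝ) ^ 2) * ‖∑ p, x p‖ ^ 2,
    isHermitianQuadratic_mul_normSq_sum _⟩

/-- Standard (Kirchhoff) condition: continuity, no form contribution. -/
def stdCond (n : Type) [Fintype n] : LocalCond n := deltaCond n 0

/-- Transport a local condition along a (bijective) reindexing of endpoints. -/
def LocalCond.pull {n m : Type} [Fintype n] [Fintype m] (f : n → m) (c : LocalCond n) :
    LocalCond m where
  W := c.W.comap (LinearMap.funLeft ℂ ℂ f)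
  Q := fun x => c.Q (x ∘ f)
  herm := by
    obtain ⟨B, h1, h2, h3, h4⟩ := c.herm
    exact ⟨fun x y => B (x ∘ f) (y ∘ f), fun x y z => h1 (x ∘ f) (y ∘ f) (z ∘ f),
      fun a x y => h2 a (x ∘ f) (y ∘ f), fun x y => h3 (x ∘ f) (y ∘ f), fun x => h4 (x ∘ f)⟩

namespace MetricGraph

/-- A choice of vertex conditions at every vertex of the graph. -/
abbrev VertexConds (G : MetricGraph) := ∀ v : G.V, LocalCond (G.Endpts v)

/-- The form domain determined by the vertex conditions: edgewise `H¹` functions whose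
boundary values at each vertex lie in the prescribed subspace. -/
def domain (G : MetricGraph) (vc : G.VertexConds) : Set (G.E → ℝ → ℂ) :=
  {f | (∀ e, IsH1 (f e) (G.ℓ e)) ∧ ∀ v, G.vals f v ∈ (vc v).W}

/-- The quadratic form of the Laplacian with the given vertex conditions. -/
def form (G : MetricGraph) (vc : G.VertexConds) (f : G.E → ℝ → ℂ) : ℝ :=
  G.energy f + ∑ v, (vc v).Q (G.vals f v)

/-- The `k`-th eigenvalue (`k ≥ 1`, counted with multiplicity) of the Laplacian on `G`
with vertex conditions `vc`, via the min–max principle: the infimum over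
`k`-dimensional subspaces of the form domain of the maximal Rayleigh quotient. -/
def lambda (G : MetricGraph) (vc : G.VertexConds) (k : ℕ) : ℝ :=
  sInf { r | ∃ φ : Fin k → (G.E → ℝ → ℂ),
    LinearIndependent ℂ φ ∧
    (Submodule.span ℂ (Set.range φ) : Set (G.E → ℝ → ℂ)) ⊆ G.domain vc ∧
    r = sSup { q | ∃ ψ ∈ Submodule.span ℂ (Set.range φ), ψ ≠ 0 ∧
      q = G.form vc ψ / G.normSq ψ } }

end MetricGraph

section HermAux

variable {n : Type} [Fintype n]

lemma hermQ_zero {Q : (n → ℂ) → ℝ} (h : IsHermitianQuadratic Q) : Q 0 = 0 := by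
  obtain ⟨B, hadd, _, _, hre⟩ := h
  have h0 : B 0 0 = 0 := by
    have := hadd 0 0 0
    simp only [add_zero] at this
    exact (left_eq_add.mp this)
  rw [← hre, h0, Complex.zero_re]

lemma hermQ_bound {Q : (n → ℂ) → ℝ} (h : IsHermitianQuadratic Q) :
    ∃ C : ℝ, 0 ≤ C ∧ ∀ x, -(C * ∑ p, ‖x p‖ ^ 2) ≤ Q x := by
  classical
  obtain ⟨B, hadd, hsmul, hsymm, hre⟩ := h
  have hB0 : ∀ y, B 0 y = 0 := by
    intro y
    have := hadd 0 0 y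
    simp only [add_zero] at this
    exact (left_eq_add.mp this)
  have hsum1 : ∀ (f : n → (n → ℂ)) (y : n → ℂ),
      B (∑ i, f i) y = ∑ i, B (f i) y := by
    intro f y
    induction (Finset.univ : Finset n) using Finset.cons_induction with
    | empty => simpa using hB0 y
    | cons a s ha ih =>
        rw [Finset.sum_cons, Finset.sum_cons, hadd, ih]
  have hsmul2 : ∀ (c : ℂ) (x y : n → ℂ), B x (c • y) = c * B x y := by
    intro c x y
    rw [hsymm, hsmul, map_mul, Complex.conj_conj, ← hsymm]
  have hadd2 : ∀ x y z : n → ℂ, B x (y + z) = B x y + B x z := by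
    intro x y z
    rw [hsymm, hadd, map_add, ← hsymm, ← hsymm]
  have hB0' : ∀ x, B x 0 = 0 := by
    intro x
    have := hadd2 x 0 0
    simp only [add_zero] at this
    exact (left_eq_add.mp this)
  have hsum2 : ∀ (x : n → ℂ) (f : n → (n → ℂ)),
      B x (∑ i, f i) = ∑ i, B x (f i) := by
    intro x f
    induction (Finset.univ : Finset n) using Finset.cons_induction with
    | empty => simpa using hB0' x
    | cons a s ha ih =>
        rw [Finset.sum_cons, Finset.sum_cons, hadd2, ih]
  set e : n → (n → ℂ) := fun p => Pi.single p 1 with he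
  refine ⟨∑ p, ∑ q, ‖B (e p) (e q)‖, by positivity, ?_⟩
  intro x
  have hx : x = ∑ p, x p • e p := by
    funext q
    simp [he, Pi.single_apply, Finset.sum_ite_eq', mul_comm]
  have hexp : B x x = ∑ p, ∑ q, (starRingEnd ℂ) (x p) * (x q * B (e p) (e q)) := by
    calc B x x = B (∑ p, x p • e p) (∑ q, x q • e q) := by rw [← hx]
    _ = ∑ p, B (x p • e p) (∑ q, x q • e q) := hsum1 _ _
    _ = ∑ p, (starRingEnd ℂ) (x p) * B (e p) (∑ q, x q • e q) :=
        Finset.sum_congr rfl fun p _ => hsmul _ _ _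
    _ = ∑ p, (starRingEnd ℂ) (x p) * ∑ q, B (e p) (x q • e q) := by
        refine Finset.sum_congr rfl fun p _ => ?_
        rw [hsum2]
    _ = ∑ p, ∑ q, (starRingEnd ℂ) (x p) * (x q * B (e p) (e q)) := by
        refine Finset.sum_congr rfl fun p _ => ?_
        rw [Finset.mul_sum]
        exact Finset.sum_congr rfl fun q _ => by rw [hsmul2]
  have hnorm : ‖B x x‖ ≤ ∑ p, ∑ q, ‖x p‖ * (‖x q‖ * ‖B (e p) (e q)‖) := by
    rw [hexp]
    refine (norm_sum_le _ _).trans (Finset.sum_le_sum fun p _ => ?_)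
    refine (norm_sum_le _ _).trans (Finset.sum_le_sum fun q _ => ?_)
    rw [norm_mul, norm_mul, RCLike.norm_conj]
  have hS : ∀ p q : n, ‖x p‖ * ‖x q‖ ≤ ∑ r, ‖x r‖ ^ 2 := by
    intro p q
    have h1 : ‖x p‖ ^ 2 ≤ ∑ r, ‖x r‖ ^ 2 :=
      Finset.single_le_sum (f := fun r => ‖x r‖ ^ 2) (fun r _ => by positivity) (Finset.mem_univ p)
    have h2 : ‖x q‖ ^ 2 ≤ ∑ r, ‖x r‖ ^ 2 :=
      Finset.single_le_sum (f := fun r => ‖x r‖ ^ 2) (fun r _ => by positivity) (Finset.mem_univ q)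
    nlinarith [norm_nonneg (x p), norm_nonneg (x q)]
  have hfin : ‖B x x‖ ≤ (∑ p, ∑ q, ‖B (e p) (e q)‖) * ∑ r, ‖x r‖ ^ 2 := by
    refine hnorm.trans ?_
    rw [Finset.sum_mul]
    refine Finset.sum_le_sum fun p _ => ?_
    rw [Finset.sum_mul]
    refine Finset.sum_le_sum fun q _ => ?_
    have := hS p q
    have hb : (0:ℝ) ≤ ‖B (e p) (e q)‖ := norm_nonneg _
    calc ‖x p‖ * (‖x q‖ * ‖B (e p) (e q)‖) = (‖x p‖ * ‖x q‖) * ‖B (e p) (e q)‖ := by ring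
    _ ≤ (∑ r, ‖x r‖ ^ 2) * ‖B (e p) (e q)‖ := by
        exact mul_le_mul_of_nonneg_right this hb
    _ = ‖B (e p) (e q)‖ * ∑ r, ‖x r‖ ^ 2 := by ring
  have hQre : -(‖B x x‖) ≤ Q x := by
    rw [← hre]
    calc -(‖B x x‖) ≤ -|(B x x).re| := by
          simp only [neg_le_neg_iff]
          exact Complex.abs_re_le_norm _
    _ ≤ (B x x).re := neg_abs_le _
  exact le_trans (by simpa using neg_le_neg hfin) hQre

end HermAux
section TraceAux

lemma sq_norm_intervalIntegral_le {g : ℝ → ℂ} {L : ℝ} (hL : 0 < L)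
    (hg : MeasureTheory.MemLp g 2 (MeasureTheory.volume.restrict (Set.Ioc (0:ℝ) L)))
    {s t : ℝ} (hs : 0 ≤ s) (hst : s ≤ t) (htL : t ≤ L) :
    ‖∫ u in s..t, g u‖ ^ 2 ≤ (∫ u in (0:ℝ)..L, ‖g u‖ ^ 2) * (t - s) := by
  set E := ∫ u in (0:ℝ)..L, ‖g u‖ ^ 2 with hE
  have hgi : IntegrableOn g (Set.Ioc 0 L) := hg.integrable one_le_two
  have hgsq : IntegrableOn (fun u => ‖g u‖ ^ 2) (Set.Ioc 0 L) := by
    have h := hg.integrable_norm_rpow (by norm_num) (by norm_num)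
    refine h.congr (Filter.Eventually.of_forall fun u => ?_)
    simp [ENNReal.toReal_ofNat, Real.rpow_two]
  have hgsqi : IntervalIntegrable (fun u => ‖g u‖ ^ 2) volume 0 L :=
    (intervalIntegrable_iff_integrableOn_Ioc_of_le hL.le).2 hgsq
  have hE0 : (0:ℝ) ≤ E := intervalIntegral.integral_nonneg hL.le fun u _ => by positivity
  have hsub : (∫ u in s..t, ‖g u‖ ^ 2) ≤ E :=
    intervalIntegral.integral_mono_interval hs hst htL
      (Filter.Eventually.of_forall fun u => by positivity) hgsqi
  rcases eq_or_lt_of_le hst with rfl | hlt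
  · rw [intervalIntegral.integral_same]; simp
  have hts0 : 0 < t - s := by linarith
  have hgiST : IntervalIntegrable g volume s t :=
    (intervalIntegrable_iff_integrableOn_Ioc_of_le hst).2
      (hgi.mono_set (Set.Ioc_subset_Ioc hs htL))
  have hgsqST : IntervalIntegrable (fun u => ‖g u‖ ^ 2) volume s t :=
    (intervalIntegrable_iff_integrableOn_Ioc_of_le hst).2
      (hgsq.mono_set (Set.Ioc_subset_Ioc hs htL))
  rcases eq_or_lt_of_le hE0 with hE00 | hEpos
  · -- E = 0 : g vanishes a.e.
    have h0 : (fun u => ‖g u‖ ^ 2) =ᶠ[MeasureTheory.ae (volume.restrict (Set.Ioc (0:ℝ) L))] 0 := by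
      refine (MeasureTheory.integral_eq_zero_iff_of_nonneg (fun u => by positivity) hgsq).1 ?_
      rw [← intervalIntegral.integral_of_le hL.le, ← hE, ← hE00]
    have h0' : g =ᶠ[MeasureTheory.ae (volume.restrict (Set.Ioc s t))] 0 := by
      refine ae_restrict_of_ae_restrict_of_subset (Set.Ioc_subset_Ioc hs htL) ?_
      filter_upwards [h0] with u hu
      have : ‖g u‖ ^ 2 = 0 := hu
      have : ‖g u‖ = 0 := by nlinarith [norm_nonneg (g u)]
      simpa using this
    have : (∫ u in s..t, g u) = 0 := by
      rw [intervalIntegral.integral_of_le hst]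
      exact MeasureTheory.integral_eq_zero_of_ae h0'
    rw [this]
    simpa using mul_nonneg hE0 hts0.le
  -- E > 0
  set a := Real.sqrt (E / (4 * (t - s))) with haDef
  have ha : 0 < a := Real.sqrt_pos.2 (by positivity)
  have ha2 : a ^ 2 = E / (4 * (t - s)) := Real.sq_sqrt (by positivity)
  have hEa : E = a ^ 2 * (4 * (t - s)) := by
    rw [ha2]; field_simp
  have step1 : ‖∫ u in s..t, g u‖ ≤ ∫ u in s..t, ‖g u‖ :=
    intervalIntegral.norm_integral_le_integral_norm hst
  have step2 : (∫ u in s..t, ‖g u‖) ≤ ∫ u in s..t, (a + ‖g u‖ ^ 2 / (4 * a)) := by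
    refine intervalIntegral.integral_mono_on hst hgiST.norm
      (intervalIntegrable_const.add (hgsqST.div_const _)) fun u _ => ?_
    rw [← sub_le_iff_le_add', le_div_iff₀ (by positivity : (0:ℝ) < 4 * a)]
    nlinarith [sq_nonneg (‖g u‖ - 2 * a), norm_nonneg (g u)]
  have step3 : (∫ u in s..t, (a + ‖g u‖ ^ 2 / (4 * a)))
      = a * (t - s) + (∫ u in s..t, ‖g u‖ ^ 2) / (4 * a) := by
    rw [intervalIntegral.integral_add intervalIntegrable_const (hgsqST.div_const _),
      intervalIntegral.integral_const, intervalIntegral.integral_div]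
    simp [smul_eq_mul, mul_comm]
  have step4 : a * (t - s) + (∫ u in s..t, ‖g u‖ ^ 2) / (4 * a) ≤ a * (t - s) + E / (4 * a) := by
    have := div_le_div_of_nonneg_right hsub (by positivity : (0:ℝ) ≤ 4 * a)
    linarith
  have hfinal : ‖∫ u in s..t, g u‖ ≤ a * (t - s) + E / (4 * a) :=
    step1.trans (step2.trans (step3 ▸ step4))
  have hRsq : (a * (t - s) + E / (4 * a)) ^ 2 = E * (t - s) := by
    have h4a : (4:ℝ) * a ≠ 0 := by positivity
    rw [hEa]; field_simp; ring
  calc ‖∫ u in s..t, g u‖ ^ 2 ≤ (a * (t - s) + E / (4 * a)) ^ 2 :=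
        pow_le_pow_left₀ (norm_nonneg _) hfinal 2
  _ = E * (t - s) := hRsq

end TraceAux
section TraceBound

lemma trace_bound {L ε : ℝ} (hL : 0 < L) (hε : 0 < ε) :
    ∃ C : ℝ, 0 ≤ C ∧ ∀ f g : ℝ → ℂ, IsH1Deriv f g L →
      ‖f 0‖ ^ 2 + ‖f L‖ ^ 2 ≤ ε * (∫ t in (0:ℝ)..L, ‖g t‖ ^ 2)
        + C * (∫ t in (0:ℝ)..L, ‖f t‖ ^ 2) := by
  set δ := min L (ε / 2) with hδDef
  have hδ0 : 0 < δ := lt_min hL (by positivity)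
  have hδL : δ ≤ L := min_le_left _ _
  have hδε : 2 * δ ≤ ε := by
    have := min_le_right L (ε / 2); linarith
  refine ⟨4 / δ, by positivity, ?_⟩
  intro f g hfg
  obtain ⟨hg2, hrep⟩ := hfg
  set E := ∫ t in (0:ℝ)..L, ‖g t‖ ^ 2 with hE
  set N := ∫ t in (0:ℝ)..L, ‖f t‖ ^ 2 with hN
  have hCS : ∀ {s t : ℝ}, 0 ≤ s → s ≤ t → t ≤ L →
      ‖∫ u in s..t, g u‖ ^ 2 ≤ E * (t - s) := fun hs hst htL =>
    sq_norm_intervalIntegral_le hL hg2 hs hst htL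
  have hE0 : (0:ℝ) ≤ E := intervalIntegral.integral_nonneg hL.le fun u _ => by positivity
  have hgi : IntegrableOn g (Set.Ioc 0 L) := hg2.integrable one_le_two
  have hgiv : IntervalIntegrable g volume 0 L :=
    (intervalIntegrable_iff_integrableOn_Ioc_of_le hL.le).2 hgi
  -- continuity of f on [0, L]
  have hprim : ContinuousOn (fun x => ∫ u in (0:ℝ)..x, g u) (Set.Icc 0 L) := by
    have hIcc : IntegrableOn g (Set.Icc 0 L) := by
      rw [integrableOn_Icc_iff_integrableOn_Ioc]; exact hgi
    refine (intervalIntegral.continuousOn_primitive hIcc).congr fun x hx => ?_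
    rw [intervalIntegral.integral_of_le hx.1]
  have hfc : ContinuousOn f (Set.Icc 0 L) :=
    (continuousOn_const.add hprim).congr fun x hx => hrep x hx
  have hfsq : IntervalIntegrable (fun t => ‖f t‖ ^ 2) volume 0 L := by
    apply ContinuousOn.intervalIntegrable
    rw [Set.uIcc_of_le hL.le]
    exact (hfc.norm.pow 2)
  have hN0 : (0:ℝ) ≤ N := intervalIntegral.integral_nonneg hL.le fun u _ => by positivity
  have hfsub : ∀ {s t : ℝ}, 0 ≤ s → s ≤ t → t ≤ L →
      (∫ u in s..t, ‖f u‖ ^ 2) ≤ N := fun hs hst htL =>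
    intervalIntegral.integral_mono_interval hs hst htL
      (Filter.Eventually.of_forall fun u => by positivity) hfsq
  have hfsqsub : ∀ {s t : ℝ}, 0 ≤ s → s ≤ t → t ≤ L →
      IntervalIntegrable (fun u => ‖f u‖ ^ 2) volume s t := by
    intro s t hs hst htL
    apply hfsq.mono_set
    rw [Set.uIcc_of_le hst, Set.uIcc_of_le hL.le]
    exact Set.Icc_subset_Icc hs htL
  -- left endpoint
  have key0 : ∀ t ∈ Set.Icc (0:ℝ) δ, ‖f 0‖ ^ 2 ≤ 2 * ‖f t‖ ^ 2 + 2 * E * t := by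
    intro t ht
    have htL : t ∈ Set.Icc (0:ℝ) L := ⟨ht.1, ht.2.trans hδL⟩
    have h1 : f 0 = f t - ∫ u in (0:ℝ)..t, g u := by rw [hrep t htL]; ring
    have h2 : ‖∫ u in (0:ℝ)..t, g u‖ ^ 2 ≤ E * t := by
      simpa using hCS le_rfl ht.1 htL.2
    have h3 : ‖f 0‖ ≤ ‖f t‖ + ‖∫ u in (0:ℝ)..t, g u‖ := by
      rw [h1]; exact norm_sub_le _ _
    nlinarith [norm_nonneg (f 0), norm_nonneg (f t), norm_nonneg (∫ u in (0:ℝ)..t, g u),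
      sq_nonneg (‖f t‖ - ‖∫ u in (0:ℝ)..t, g u‖)]
  have hA : δ * ‖f 0‖ ^ 2 ≤ 2 * N + E * δ ^ 2 := by
    have hi1 : IntervalIntegrable (fun t => 2 * ‖f t‖ ^ 2) volume 0 δ :=
      (hfsqsub le_rfl hδ0.le hδL).const_mul 2
    have hi2 : IntervalIntegrable (fun t : ℝ => 2 * E * t) volume 0 δ :=
      Continuous.intervalIntegrable (continuous_const.mul continuous_id) _ _
    have h := intervalIntegral.integral_mono_on hδ0.le intervalIntegrable_const
      (hi1.add hi2) key0
    rw [intervalIntegral.integral_const, smul_eq_mul,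
      intervalIntegral.integral_add hi1 hi2,
      intervalIntegral.integral_const_mul, intervalIntegral.integral_const_mul,
      integral_id] at h
    have hsmall : (∫ t in (0:ℝ)..δ, ‖f t‖ ^ 2) ≤ N := hfsub le_rfl hδ0.le hδL
    nlinarith
  -- right endpoint
  have keyL : ∀ t ∈ Set.Icc (L - δ) L, ‖f L‖ ^ 2 ≤ 2 * ‖f t‖ ^ 2 + 2 * E * (L - t) := by
    intro t ht
    have ht0 : (0:ℝ) ≤ t := le_trans (by linarith) ht.1
    have htL : t ∈ Set.Icc (0:ℝ) L := ⟨ht0, ht.2⟩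
    have hgt : IntervalIntegrable g volume 0 t :=
      (intervalIntegrable_iff_integrableOn_Ioc_of_le ht0).2
        (hgi.mono_set (Set.Ioc_subset_Ioc le_rfl ht.2))
    have hsubint : (∫ u in (0:ℝ)..L, g u) - (∫ u in (0:ℝ)..t, g u) = ∫ u in t..L, g u :=
      intervalIntegral.integral_interval_sub_left hgiv hgt
    have h1 : f L - f t = ∫ u in t..L, g u := by
      rw [hrep L ⟨hL.le, le_rfl⟩, hrep t htL, ← hsubint]; ring
    have h2 : ‖∫ u in t..L, g u‖ ^ 2 ≤ E * (L - t) := hCS ht0 ht.2 le_rfl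
    have h3 : ‖f L‖ ≤ ‖f t‖ + ‖∫ u in t..L, g u‖ := by
      have : f L = f t + ∫ u in t..L, g u := by rw [← h1]; ring
      rw [this]; exact norm_add_le _ _
    nlinarith [norm_nonneg (f L), norm_nonneg (f t), norm_nonneg (∫ u in t..L, g u),
      sq_nonneg (‖f t‖ - ‖∫ u in t..L, g u‖)]
  have hB : δ * ‖f L‖ ^ 2 ≤ 2 * N + E * δ ^ 2 := by
    have hLδ0 : (0:ℝ) ≤ L - δ := by linarith
    have hLδ : L - δ ≤ L := by linarith
    have hics : IntervalIntegrable (fun u => ‖f u‖ ^ 2) volume (L - δ) L :=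
      hfsqsub hLδ0 hLδ le_rfl
    have hi1 : IntervalIntegrable (fun t => 2 * ‖f t‖ ^ 2) volume (L - δ) L :=
      hics.const_mul 2
    have hi2 : IntervalIntegrable (fun t : ℝ => 2 * E * (L - t)) volume (L - δ) L :=
      Continuous.intervalIntegrable (continuous_const.mul (continuous_const.sub continuous_id)) _ _
    have h := intervalIntegral.integral_mono_on hLδ intervalIntegrable_const
      (hi1.add hi2) keyL
    have hid : (∫ t in (L - δ)..L, (2 * E * (L - t))) = 2 * E * (δ ^ 2 / 2) := by
      rw [intervalIntegral.integral_const_mul]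
      have : (∫ t in (L - δ)..L, (L - t)) = δ ^ 2 / 2 := by
        have hidInt : IntervalIntegrable (fun t : ℝ => t) volume (L - δ) L :=
          Continuous.intervalIntegrable continuous_id _ _
        rw [intervalIntegral.integral_sub intervalIntegrable_const hidInt]
        rw [intervalIntegral.integral_const, smul_eq_mul]
        rw [show (∫ t in (L - δ)..L, t) = (L ^ 2 - (L - δ) ^ 2) / 2 from integral_id]
        ring
      rw [this]
    rw [intervalIntegral.integral_const, smul_eq_mul,
      intervalIntegral.integral_add hi1 hi2,
      intervalIntegral.integral_const_mul, hid] at h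
    have hsmall : (∫ t in (L - δ)..L, ‖f t‖ ^ 2) ≤ N := hfsub hLδ0 hLδ le_rfl
    nlinarith
  -- combine
  have hsum : δ * (‖f 0‖ ^ 2 + ‖f L‖ ^ 2) ≤ 4 * N + 2 * E * δ ^ 2 := by nlinarith
  have hdiv : ‖f 0‖ ^ 2 + ‖f L‖ ^ 2 ≤ 4 / δ * N + 2 * δ * E := by
    rw [show 4 / δ * N + 2 * δ * E = (4 * N + 2 * E * δ ^ 2) / δ by field_simp]
    rw [le_div_iff₀ hδ0]
    linarith
  have : 2 * δ * E ≤ ε * E := by nlinarith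
  linarith

end TraceBound
section GraphAux

namespace MetricGraph

lemma normSq_nonneg (G : MetricGraph) (f : G.E → ℝ → ℂ) : 0 ≤ G.normSq f :=
  Finset.sum_nonneg fun e _ =>
    intervalIntegral.integral_nonneg (G.ℓ_pos e).le fun u _ => by positivity

/-- The endpoints of all edges, partitioned over vertices. -/
def endptsEquiv (G : MetricGraph) : (Σ v : G.V, G.Endpts v) ≃ G.E × Bool where
  toFun := fun x => x.2.1
  invFun := fun q => ⟨G.ends q, ⟨q, rfl⟩⟩
  left_inv := by rintro ⟨v, ⟨q, hq⟩⟩; subst hq; rfl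
  right_inv := fun q => rfl

lemma sum_endpts (G : MetricGraph) (h : G.E × Bool → ℝ) :
    ∑ v, ∑ p : G.Endpts v, h p.1 = ∑ e, (h (e, false) + h (e, true)) := by
  classical
  calc ∑ v, ∑ p : G.Endpts v, h p.1
      = ∑ x : Σ v : G.V, G.Endpts v, h x.2.1 := by
        rw [← Finset.univ_sigma_univ, Finset.sum_sigma]
  _ = ∑ q : G.E × Bool, h q := Fintype.sum_equiv G.endptsEquiv _ _ (fun x => rfl)
  _ = ∑ e, (h (e, false) + h (e, true)) := by
        rw [Fintype.sum_prod_type]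
        exact Finset.sum_congr rfl fun e _ => by rw [Fintype.sum_bool]; ring

lemma form_lower_bound (G : MetricGraph) (vc : G.VertexConds) :
    ∃ M : ℝ, 0 ≤ M ∧ ∀ f ∈ G.domain vc, -(M * G.normSq f) ≤ G.form vc f := by
  classical
  choose Cv hCv0 hCv using fun v : G.V => hermQ_bound (vc v).herm
  set CQ := ∑ v, Cv v with hCQdef
  have hCQ0 : 0 ≤ CQ := Finset.sum_nonneg fun v _ => hCv0 v
  have hCvle : ∀ v, Cv v ≤ CQ := fun v =>
    Finset.single_le_sum (fun w _ => hCv0 w) (Finset.mem_univ v)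
  have hεpos : (0:ℝ) < (CQ + 1)⁻¹ := by positivity
  choose Ce hCe0 hCe using fun e : G.E => trace_bound (G.ℓ_pos e) hεpos
  set CE := ∑ e, Ce e with hCEdef
  have hCE0 : 0 ≤ CE := Finset.sum_nonneg fun e _ => hCe0 e
  have hCele : ∀ e, Ce e ≤ CE := fun e =>
    Finset.single_le_sum (fun e' _ => hCe0 e') (Finset.mem_univ e)
  refine ⟨(CQ + 1) * CE, by positivity, ?_⟩
  intro f hf
  set T : G.E → ℝ := fun e => ‖f e 0‖ ^ 2 + ‖f e (G.ℓ e)‖ ^ 2 with hTdef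
  set N : G.E → ℝ := fun e => ∫ t in (0:ℝ)..(G.ℓ e), ‖f e t‖ ^ 2 with hNdef
  have hT0 : ∀ e, 0 ≤ T e := fun e => by positivity
  have hN0 : ∀ e, 0 ≤ N e := fun e =>
    intervalIntegral.integral_nonneg (G.ℓ_pos e).le fun u _ => by positivity
  have hEn : ∀ e, (T e - Ce e * N e) * (CQ + 1) ≤ edgeEnergy (f e) (G.ℓ e) := by
    intro e
    refine le_csInf ?_ ?_
    · obtain ⟨g, hg⟩ := hf.1 e
      exact ⟨_, g, hg, rfl⟩
    · rintro r ⟨g, hg, rfl⟩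
      have h := hCe e (f e) g hg
      have hpos : (0:ℝ) < CQ + 1 := by positivity
      set r := ∫ t in (0:ℝ)..(G.ℓ e), ‖g t‖ ^ 2 with hrdef
      have h2 := mul_le_mul_of_nonneg_left h hpos.le
      have h3 : (CQ + 1) * ((CQ + 1)⁻¹ * r + Ce e * N e)
          = r + (CQ + 1) * (Ce e * N e) := by
        field_simp
      rw [h3] at h2
      have h4 : (CQ + 1) * T e ≤ r + (CQ + 1) * (Ce e * N e) := h2
      nlinarith [h4]
  have hpart : ∑ v, ∑ p : G.Endpts v, ‖G.endVal f p.1‖ ^ 2 = ∑ e, T e := by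
    rw [G.sum_endpts (fun q => ‖G.endVal f q‖ ^ 2)]
    refine Finset.sum_congr rfl fun e _ => ?_
    simp [MetricGraph.endVal, hTdef]
  have hQ : -(CQ * ∑ e, T e) ≤ ∑ v, (vc v).Q (G.vals f v) := by
    have h1 : ∀ v, -(Cv v * ∑ p : G.Endpts v, ‖G.endVal f p.1‖ ^ 2) ≤ (vc v).Q (G.vals f v) :=
      fun v => hCv v (G.vals f v)
    have h2 : ∀ v, -(CQ * ∑ p : G.Endpts v, ‖G.endVal f p.1‖ ^ 2)
        ≤ -(Cv v * ∑ p : G.Endpts v, ‖G.endVal f p.1‖ ^ 2) := by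
      intro v
      have hs : (0:ℝ) ≤ ∑ p : G.Endpts v, ‖G.endVal f p.1‖ ^ 2 :=
        Finset.sum_nonneg fun p _ => by positivity
      nlinarith [hCvle v]
    calc -(CQ * ∑ e, T e)
        = -(CQ * ∑ v, ∑ p : G.Endpts v, ‖G.endVal f p.1‖ ^ 2) := by rw [hpart]
    _ = ∑ v, -(CQ * ∑ p : G.Endpts v, ‖G.endVal f p.1‖ ^ 2) := by
          rw [Finset.mul_sum, ← Finset.sum_neg_distrib]
    _ ≤ ∑ v, (vc v).Q (G.vals f v) :=
          Finset.sum_le_sum fun v _ => le_trans (h2 v) (h1 v)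
  have hNsum : G.normSq f = ∑ e, N e := rfl
  have hEnergy : ∑ e, (T e - Ce e * N e) * (CQ + 1) ≤ G.energy f :=
    Finset.sum_le_sum fun e _ => hEn e
  have hCeN : ∀ e, Ce e * N e ≤ CE * N e := fun e =>
    mul_le_mul_of_nonneg_right (hCele e) (hN0 e)
  have hTsum : 0 ≤ ∑ e, T e := Finset.sum_nonneg fun e _ => hT0 e
  have hsum1 : ∑ e, (T e - Ce e * N e) * (CQ + 1)
      = (∑ e, T e) * (CQ + 1) - (∑ e, Ce e * N e) * (CQ + 1) := by
    rw [← Finset.sum_mul, Finset.sum_sub_distrib, sub_mul]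
  have hS2 : (∑ e, Ce e * N e) ≤ CE * G.normSq f := by
    rw [hNsum, Finset.mul_sum]
    exact Finset.sum_le_sum fun e _ => hCeN e
  have hS2' : (∑ e, Ce e * N e) * (CQ + 1) ≤ CE * G.normSq f * (CQ + 1) :=
    mul_le_mul_of_nonneg_right hS2 (by positivity)
  have hTsum' : 0 ≤ (∑ e, T e) * (CQ + 1) - CQ * ∑ e, T e := by nlinarith
  have hform : G.form vc f = G.energy f + ∑ v, (vc v).Q (G.vals f v) := rfl
  rw [hform]
  rw [hsum1] at hEnergy
  nlinarith [hEnergy, hQ, hS2', hTsum']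

end MetricGraph

end GraphAux
section LamAux

lemma edgeEnergy_eq_zero {f : ℝ → ℂ} {L : ℝ} (hL : 0 < L)
    (h0 : ∀ x ∈ Set.Icc (0:ℝ) L, f x = 0) : edgeEnergy f L = 0 := by
  have hmem : (0:ℝ) ∈ { r | ∃ g, IsH1Deriv f g L ∧ r = ∫ t in (0:ℝ)..L, ‖g t‖ ^ 2 } := by
    refine ⟨fun _ => 0, ⟨?_, ?_⟩, by simp⟩
    · exact MeasureTheory.memLp_const 0
    · intro x hx
      rw [h0 x hx, h0 0 ⟨le_rfl, hL.le⟩]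
      simp
  have hlb : ∀ r ∈ { r | ∃ g, IsH1Deriv f g L ∧ r = ∫ t in (0:ℝ)..L, ‖g t‖ ^ 2 }, (0:ℝ) ≤ r := by
    rintro r ⟨g, _, rfl⟩
    exact intervalIntegral.integral_nonneg hL.le fun u _ => by positivity
  exact le_antisymm (csInf_le ⟨0, hlb⟩ hmem) (le_csInf ⟨0, hmem⟩ hlb)

namespace MetricGraph

lemma normSq_eq_zero (G : MetricGraph) {f : G.E → ℝ → ℂ}
    (h : ∀ e, ∀ x ∈ Set.Icc (0:ℝ) (G.ℓ e), f e x = 0) : G.normSq f = 0 := by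
  refine Finset.sum_eq_zero fun e _ => ?_
  rw [show (∫ t in (0:ℝ)..(G.ℓ e), ‖f e t‖ ^ 2)
      = ∫ t in (0:ℝ)..(G.ℓ e), (0:ℝ) from
    intervalIntegral.integral_congr fun x hx => by
      rw [Set.uIcc_of_le (G.ℓ_pos e).le] at hx
      simp [h e x hx]]
  simp

lemma vals_eq_zero (G : MetricGraph) {f : G.E → ℝ → ℂ}
    (h : ∀ e, ∀ x ∈ Set.Icc (0:ℝ) (G.ℓ e), f e x = 0) (v : G.V) : G.vals f v = 0 := by
  funext p
  have hle : (if p.1.2 then G.ℓ p.1.1 else 0) ∈ Set.Icc (0:ℝ) (G.ℓ p.1.1) := by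
    rcases p.1.2 with _ | _ <;> simp [(G.ℓ_pos p.1.1).le]
  exact h p.1.1 _ hle

lemma form_eq_zero (G : MetricGraph) (vc : G.VertexConds) {f : G.E → ℝ → ℂ}
    (h : ∀ e, ∀ x ∈ Set.Icc (0:ℝ) (G.ℓ e), f e x = 0) : G.form vc f = 0 := by
  have h1 : G.energy f = 0 :=
    Finset.sum_eq_zero fun e _ => edgeEnergy_eq_zero (G.ℓ_pos e) (h e)
  have h2 : ∀ v, (vc v).Q (G.vals f v) = 0 := fun v => by
    rw [G.vals_eq_zero h v]; exact hermQ_zero (vc v).herm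
  unfold MetricGraph.form
  rw [h1, Finset.sum_congr rfl fun v _ => h2 v]
  simp

/-- The set of Rayleigh quotients over the span of a family. -/
def raySet (G : MetricGraph) (vc : G.VertexConds) {k : ℕ} (φ : Fin k → (G.E → ℝ → ℂ)) :
    Set ℝ :=
  { q | ∃ ψ ∈ Submodule.span ℂ (Set.range φ), ψ ≠ 0 ∧ q = G.form vc ψ / G.normSq ψ }

/-- The set whose infimum defines `lambda`. -/
def lamSet (G : MetricGraph) (vc : G.VertexConds) (k : ℕ) : Set ℝ :=
  { r | ∃ φ : Fin k → (G.E → ℝ → ℂ),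
    LinearIndependent ℂ φ ∧
    (Submodule.span ℂ (Set.range φ) : Set (G.E → ℝ → ℂ)) ⊆ G.domain vc ∧
    r = sSup (G.raySet vc φ) }

lemma lambda_eq_sInf (G : MetricGraph) (vc : G.VertexConds) (k : ℕ) :
    G.lambda vc k = sInf (G.lamSet vc k) := rfl

/-- The ghost family: functions supported outside all edge intervals. -/
def ghostF (G : MetricGraph) (k : ℕ) : Fin k → G.E → ℝ → ℂ :=
  fun i e x => if x = G.ℓ e + (i : ℕ) + 1 then 1 else 0

lemma ghostF_li (G : MetricGraph) (k : ℕ) : LinearIndependent ℂ (G.ghostF k) := by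
  rw [Fintype.linearIndependent_iff]
  intro c hc i
  set e₀ := Classical.arbitrary G.E
  have h := congrFun (congrFun hc e₀) (G.ℓ e₀ + (i : ℕ) + 1)
  simp only [Finset.sum_apply, Pi.smul_apply, smul_eq_mul, Pi.zero_apply] at h
  have key : ∀ j : Fin k, (G.ghostF k j) e₀ (G.ℓ e₀ + (i : ℕ) + 1)
      = if j = i then 1 else 0 := by
    intro j
    unfold ghostF
    by_cases hji : j = i
    · subst hji; simp
    · rw [if_neg, if_neg hji]
      intro hx
      apply hji
      have h2 : ((j : ℕ) : ℝ) = ((i : ℕ) : ℝ) := by linarith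
      have h3 : (j : ℕ) = (i : ℕ) := by exact_mod_cast h2
      exact Fin.val_injective h3
  rw [Finset.sum_congr rfl fun j _ => by rw [key j]] at h
  simpa using h

lemma ghost_span_vanish (G : MetricGraph) (k : ℕ) :
    ∀ ψ ∈ Submodule.span ℂ (Set.range (G.ghostF k)),
      ∀ e, ∀ x ∈ Set.Icc (0:ℝ) (G.ℓ e), ψ e x = 0 := by
  intro ψ hψ
  induction hψ using Submodule.span_induction with
  | mem ψ' hψ' =>
      obtain ⟨i, rfl⟩ := hψ'
      intro e x hx
      unfold ghostF
      rw [if_neg]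
      intro hx'
      have : ((i:ℕ):ℝ) ≥ 0 := Nat.cast_nonneg _
      have := hx.2
      linarith [hx', hx.2]
  | zero => intro e x _; rfl
  | add ψ₁ ψ₂ h₁ h₂ ih₁ ih₂ =>
      intro e x hx
      have : (ψ₁ + ψ₂) e x = ψ₁ e x + ψ₂ e x := rfl
      rw [this, ih₁ e x hx, ih₂ e x hx, add_zero]
  | smul c ψ' h' ih =>
      intro e x hx
      have : (c • ψ') e x = c * ψ' e x := rfl
      rw [this, ih e x hx, mul_zero]

lemma ghost_span_domain (G : MetricGraph) (vc : G.VertexConds) (k : ℕ) :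
    (Submodule.span ℂ (Set.range (G.ghostF k)) : Set (G.E → ℝ → ℂ)) ⊆ G.domain vc := by
  intro ψ hψ
  have hv := G.ghost_span_vanish k ψ hψ
  constructor
  · intro e
    refine ⟨fun _ => 0, MeasureTheory.memLp_const 0, fun x hx => ?_⟩
    rw [hv e x hx, hv e 0 ⟨le_rfl, (G.ℓ_pos e).le⟩]
    simp
  · intro v
    rw [G.vals_eq_zero hv v]
    exact Submodule.zero_mem _

lemma ghost_mem_lamSet (G : MetricGraph) (vc : G.VertexConds) {k : ℕ} (hk : 1 ≤ k) :
    (0:ℝ) ∈ G.lamSet vc k := by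
  refine ⟨G.ghostF k, G.ghostF_li k, G.ghost_span_domain vc k, ?_⟩
  have hray : G.raySet vc (G.ghostF k) = {0} := by
    ext q
    constructor
    · rintro ⟨ψ, hmem, hne, rfl⟩
      have hv := G.ghost_span_vanish k ψ hmem
      rw [G.form_eq_zero vc hv, G.normSq_eq_zero hv]
      simp
    · rintro rfl
      refine ⟨G.ghostF k ⟨0, hk⟩, Submodule.subset_span (Set.mem_range_self _),
        (G.ghostF_li k).ne_zero _, ?_⟩
      have hv := G.ghost_span_vanish k _ (Submodule.subset_span (Set.mem_range_self (⟨0, hk⟩ : Fin k)))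
      rw [G.form_eq_zero vc hv, G.normSq_eq_zero hv]
      simp
  rw [hray, csSup_singleton]

lemma rayleigh_bound (G : MetricGraph) (vc : G.VertexConds) :
    ∃ M : ℝ, 0 ≤ M ∧ ∀ f ∈ G.domain vc, -M ≤ G.form vc f / G.normSq f := by
  obtain ⟨M, hM0, hM⟩ := G.form_lower_bound vc
  refine ⟨M, hM0, fun f hf => ?_⟩
  rcases eq_or_lt_of_le (G.normSq_nonneg f) with h0 | hpos
  · rw [← h0, div_zero]; linarith
  · rw [le_div_iff₀ hpos]
    have := hM f hf
    nlinarith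

lemma lamSet_bddBelow (G : MetricGraph) (vc : G.VertexConds) {k : ℕ} (hk : 1 ≤ k) :
    BddBelow (G.lamSet vc k) := by
  obtain ⟨M, hM0, hM⟩ := G.rayleigh_bound vc
  refine ⟨-M, ?_⟩
  rintro r ⟨φ, hli, hdom, rfl⟩
  by_cases hbd : BddAbove (G.raySet vc φ)
  · have hmem : G.form vc (φ ⟨0, hk⟩) / G.normSq (φ ⟨0, hk⟩) ∈ G.raySet vc φ :=
      ⟨φ ⟨0, hk⟩, Submodule.subset_span (Set.mem_range_self _), hli.ne_zero _, rfl⟩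
    have h1 : -M ≤ G.form vc (φ ⟨0, hk⟩) / G.normSq (φ ⟨0, hk⟩) :=
      hM _ (hdom (Submodule.subset_span (Set.mem_range_self _)))
    exact h1.trans (le_csSup hbd hmem)
  · rw [Real.sSup_of_not_bddAbove hbd]; linarith

end MetricGraph

end LamAux
section KerAux

lemma exists_li_ker {V : Type} [AddCommGroup V] [Module ℂ V] {k : ℕ}
    (φ : Fin (k + 1) → V) (hli : LinearIndependent ℂ φ) (L : V →ₗ[ℂ] ℂ) :
    ∃ ψ : Fin k → V, LinearIndependent ℂ ψ ∧
      ∀ i, ψ i ∈ Submodule.span ℂ (Set.range φ) ⊓ LinearMap.ker L := by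
  haveI : FiniteDimensional ℂ (Submodule.span ℂ (Set.range φ)) :=
    FiniteDimensional.span_of_finite ℂ (Set.finite_range φ)
  have hrank : k ≤ Module.finrank ℂ
      (LinearMap.ker (L.comp (Submodule.span ℂ (Set.range φ)).subtype)) := by
    have h1 := LinearMap.finrank_range_add_finrank_ker
      (L.comp (Submodule.span ℂ (Set.range φ)).subtype)
    have h2 : Module.finrank ℂ (Submodule.span ℂ (Set.range φ)) = k + 1 := by
      rw [finrank_span_eq_card hli, Fintype.card_fin]
    have h3 : Module.finrank ℂ
        (LinearMap.range (L.comp (Submodule.span ℂ (Set.range φ)).subtype)) ≤ 1 := by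
      have := Submodule.finrank_le
        (LinearMap.range (L.comp (Submodule.span ℂ (Set.range φ)).subtype))
      rwa [Module.finrank_self] at this
    omega
  have b := Module.finBasis ℂ
    (LinearMap.ker (L.comp (Submodule.span ℂ (Set.range φ)).subtype))
  refine ⟨fun i => ((b (Fin.castLE hrank i) : Submodule.span ℂ (Set.range φ)) : V), ?_, ?_⟩
  · have hinj : Function.Injective
        (((Submodule.span ℂ (Set.range φ)).subtype.comp
          (LinearMap.ker (L.comp (Submodule.span ℂ (Set.range φ)).subtype)).subtype)) :=
      (Submodule.injective_subtype _).comp (Submodule.injective_subtype _)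
    exact (b.linearIndependent.comp _ (Fin.castLE_injective hrank)).map'
      _ (LinearMap.ker_eq_bot.mpr hinj)
  · intro i
    constructor
    · exact ((b (Fin.castLE hrank i)) : Submodule.span ℂ (Set.range φ)).2
    · have h := (b (Fin.castLE hrank i)).2
      rw [LinearMap.mem_ker, LinearMap.comp_apply] at h
      exact h

end KerAux

/-- Sum of the endpoint values at a fixed vertex, as a linear functional. -/
def MetricGraph.sumVal (G : MetricGraph) (v₀ : G.V) : (G.E → ℝ → ℂ) →ₗ[ℂ] ℂ where
  toFun ψ := ∑ p : G.Endpts v₀, G.endVal ψ p.1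
  map_add' ψ χ := by
    simp only [MetricGraph.endVal, Pi.add_apply]
    rw [← Finset.sum_add_distrib]
  map_smul' c ψ := by
    simp only [MetricGraph.endVal, Pi.smul_apply, smul_eq_mul, RingHom.id_apply]
    rw [← Finset.mul_sum]

/-- Increasing the δ′ strength at a single vertex within one sign
(`0 < α₀ < α̃₀` or `α₀ < α̃₀ < 0`) decreases the eigenvalues, with interlacing through
the anti-standard problem at that vertex. -/
theorem delta'_strength_same_sign_interlacing
    (G : MetricGraph) (hG : G.Connected) (v₀ : G.V) (vc : G.VertexConds)
    (α₀ α₀' : ℝ) (hα₀ : α₀ ≠ 0) (hα₀' : α₀' ≠ 0)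
    (hord : (0 < α₀ ∧ α₀ < α₀') ∨ (α₀ < α₀' ∧ α₀' < 0)) (k : ℕ) (hk : 1 ≤ k) :
    G.lambda (Function.update vc v₀ (delta'Cond (G.Endpts v₀) α₀')) k ≤
        G.lambda (Function.update vc v₀ (delta'Cond (G.Endpts v₀) α₀)) k ∧
      G.lambda (Function.update vc v₀ (delta'Cond (G.Endpts v₀) α₀)) k ≤
        G.lambda (Function.update vc v₀ (antiStdCond (G.Endpts v₀))) k ∧
      G.lambda (Function.update vc v₀ (antiStdCond (G.Endpts v₀))) k ≤
        G.lambda (Function.update vc v₀ (delta'Cond (G.Endpts v₀) α₀')) (k + 1) := by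
  classical
  set vcA := Function.update vc v₀ (delta'Cond (G.Endpts v₀) α₀) with hvcA
  set vcA' := Function.update vc v₀ (delta'Cond (G.Endpts v₀) α₀') with hvcA'
  set vc0 := Function.update vc v₀ (antiStdCond (G.Endpts v₀)) with hvc0
  -- ordering of the coupling constants
  have hinv : 1 / α₀' ≤ 1 / α₀ := by
    rcases hord with ⟨h1, h2⟩ | ⟨h1, h2⟩
    · exact one_div_le_one_div_of_le h1 h2.le
    · have hp : 0 < α₀' * α₀ := mul_pos_of_neg_of_neg h2 (by linarith)
      have hdd : 1 / α₀' - 1 / α₀ = (α₀ - α₀') / (α₀' * α₀) := by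
        rw [div_sub_div _ _ hα₀' hα₀, one_mul, mul_one]
      have h3 : (α₀ - α₀') / (α₀' * α₀) ≤ 0 :=
        div_nonpos_of_nonpos_of_nonneg (by linarith) hp.le
      linarith
  -- splitting of the quadratic form at the distinguished vertex
  have hsplit : ∀ (c : LocalCond (G.Endpts v₀)) (ψ : G.E → ℝ → ℂ),
      G.form (Function.update vc v₀ c) ψ
        = G.energy ψ + (c.Q (G.vals ψ v₀)
            + ∑ v ∈ Finset.univ.erase v₀, (vc v).Q (G.vals ψ v)) := by
    intro c ψ
    show G.energy ψ + _ = _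
    congr 1
    rw [← Finset.add_sum_erase _ _ (Finset.mem_univ v₀), Function.update_self]
    congr 1
    exact Finset.sum_congr rfl fun v hv => by
      rw [Function.update_of_ne (Finset.ne_of_mem_erase hv)]
  -- domain transfer
  have hdom_to : ∀ (c c' : LocalCond (G.Endpts v₀)), (∀ x ∈ c.W, x ∈ c'.W) →
      ∀ f, f ∈ G.domain (Function.update vc v₀ c) →
        f ∈ G.domain (Function.update vc v₀ c') := by
    rintro c c' hcc' f ⟨h1, h2⟩
    refine ⟨h1, fun v => ?_⟩
    by_cases hv : v = v₀
    · rw [hv, Function.update_self]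
      refine hcc' _ ?_
      have h3 := h2 v₀
      rwa [Function.update_self] at h3
    · rw [Function.update_of_ne hv]
      have h3 := h2 v
      rwa [Function.update_of_ne hv] at h3
  -- the three inequalities
  refine ⟨?_, ?_, ?_⟩
  · -- λ_k(α₀') ≤ λ_k(α₀)
    rw [MetricGraph.lambda_eq_sInf, MetricGraph.lambda_eq_sInf]
    refine le_csInf ⟨0, G.ghost_mem_lamSet vcA hk⟩ ?_
    rintro r ⟨φ, hli, hdom, rfl⟩
    by_cases hbd : BddAbove (G.raySet vcA φ)
    · have hdom' : (Submodule.span ℂ (Set.range φ) : Set (G.E → ℝ → ℂ)) ⊆ G.domain vcA' :=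
        fun ψ hψ => hdom_to _ _ (fun x _ => Submodule.mem_top) ψ (hdom hψ)
      have hmem' : sSup (G.raySet vcA' φ) ∈ G.lamSet vcA' k := ⟨φ, hli, hdom', rfl⟩
      refine (csInf_le (G.lamSet_bddBelow vcA' hk) hmem').trans ?_
      refine csSup_le ⟨_, ⟨φ ⟨0, hk⟩, Submodule.subset_span (Set.mem_range_self _),
        hli.ne_zero _, rfl⟩⟩ ?_
      rintro q ⟨ψ, hsp, hne, rfl⟩
      have hform_le : G.form vcA' ψ ≤ G.form vcA ψ := by
        rw [hsplit (delta'Cond (G.Endpts v₀) α₀') ψ, hsplit (delta'Cond (G.Endpts v₀) α₀) ψ]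
        have hQ' : (delta'Cond (G.Endpts v₀) α₀').Q (G.vals ψ v₀)
            = 1 / α₀' * ‖∑ p, G.vals ψ v₀ p‖ ^ 2 := rfl
        have hQ : (delta'Cond (G.Endpts v₀) α₀).Q (G.vals ψ v₀)
            = 1 / α₀ * ‖∑ p, G.vals ψ v₀ p‖ ^ 2 := rfl
        rw [hQ', hQ]
        have := mul_le_mul_of_nonneg_right hinv (by positivity : (0:ℝ) ≤ ‖∑ p, G.vals ψ v₀ p‖ ^ 2)
        linarith
      have hq : G.form vcA' ψ / G.normSq ψ ≤ G.form vcA ψ / G.normSq ψ :=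
        div_le_div_of_nonneg_right hform_le (G.normSq_nonneg ψ)
      exact hq.trans (le_csSup hbd ⟨ψ, hsp, hne, rfl⟩)
    · rw [Real.sSup_of_not_bddAbove hbd]
      exact csInf_le (G.lamSet_bddBelow vcA' hk) (G.ghost_mem_lamSet vcA' hk)
  · -- λ_k(α₀) ≤ λ_k(anti)
    rw [MetricGraph.lambda_eq_sInf, MetricGraph.lambda_eq_sInf]
    refine le_csInf ⟨0, G.ghost_mem_lamSet vc0 hk⟩ ?_
    rintro r ⟨φ, hli, hdom, rfl⟩
    have hdom' : (Submodule.span ℂ (Set.range φ) : Set (G.E → ℝ → ℂ)) ⊆ G.domain vcA :=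
      fun ψ hψ => hdom_to _ _ (fun x _ => Submodule.mem_top) ψ (hdom hψ)
    have hformeq : ∀ ψ, ψ ∈ Submodule.span ℂ (Set.range φ) → G.form vcA ψ = G.form vc0 ψ := by
      intro ψ hψ
      have hker := (hdom hψ).2 v₀
      rw [hvc0, Function.update_self] at hker
      have hsum0 : ∑ p, G.vals ψ v₀ p = 0 := (LinearMap.mem_ker).1 hker
      rw [hsplit (delta'Cond (G.Endpts v₀) α₀) ψ, hsplit (antiStdCond (G.Endpts v₀)) ψ]
      have hQ : (delta'Cond (G.Endpts v₀) α₀).Q (G.vals ψ v₀)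
          = 1 / α₀ * ‖∑ p, G.vals ψ v₀ p‖ ^ 2 := rfl
      have hQ0 : (antiStdCond (G.Endpts v₀)).Q (G.vals ψ v₀) = 0 := rfl
      rw [hQ, hQ0, hsum0]
      simp
    have hrayeq : G.raySet vcA φ = G.raySet vc0 φ := by
      ext q
      constructor
      · rintro ⟨ψ, hsp, hne, rfl⟩
        exact ⟨ψ, hsp, hne, by rw [hformeq ψ hsp]⟩
      · rintro ⟨ψ, hsp, hne, rfl⟩
        exact ⟨ψ, hsp, hne, by rw [hformeq ψ hsp]⟩
    have hmem' : sSup (G.raySet vc0 φ) ∈ G.lamSet vcA k := ⟨φ, hli, hdom', by rw [hrayeq]⟩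
    exact csInf_le (G.lamSet_bddBelow vcA hk) hmem'
  · -- λ_k(anti) ≤ λ_{k+1}(α₀')
    rw [MetricGraph.lambda_eq_sInf, MetricGraph.lambda_eq_sInf]
    refine le_csInf ⟨0, G.ghost_mem_lamSet vcA' (by omega)⟩ ?_
    rintro r ⟨φ, hli, hdom, rfl⟩
    by_cases hbd : BddAbove (G.raySet vcA' φ)
    · -- pass to the kernel of the sum functional inside the span of φ
      obtain ⟨ψfam, hliψ, hmemψ⟩ := exists_li_ker φ hli (G.sumVal v₀)
      have hspan : Submodule.span ℂ (Set.range ψfam)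
          ≤ Submodule.span ℂ (Set.range φ) ⊓ LinearMap.ker (G.sumVal v₀) := by
        rw [Submodule.span_le]
        rintro _ ⟨i, rfl⟩
        exact hmemψ i
      have hdomψ : (Submodule.span ℂ (Set.range ψfam) : Set (G.E → ℝ → ℂ)) ⊆ G.domain vc0 := by
        intro χ hχ
        obtain ⟨hχW, hχK⟩ := hspan hχ
        have hχdom := hdom hχW
        refine ⟨hχdom.1, fun v => ?_⟩
        by_cases hv : v = v₀
        · rw [hv, hvc0, Function.update_self]
          show G.vals χ v₀ ∈ LinearMap.ker (sumFun (G.Endpts v₀))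
          rw [LinearMap.mem_ker]
          exact (LinearMap.mem_ker).1 hχK
        · rw [hvc0, Function.update_of_ne hv]
          have h5 := hχdom.2 v
          rwa [hvcA', Function.update_of_ne hv] at h5
      have hformeq : ∀ χ, χ ∈ Submodule.span ℂ (Set.range ψfam) →
          G.form vc0 χ = G.form vcA' χ := by
        intro χ hχ
        obtain ⟨_, hχK⟩ := hspan hχ
        have hsum0 : ∑ p, G.vals χ v₀ p = 0 := (LinearMap.mem_ker).1 hχK
        rw [hsplit (antiStdCond (G.Endpts v₀)) χ, hsplit (delta'Cond (G.Endpts v₀) α₀') χ]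
        have hQ0 : (antiStdCond (G.Endpts v₀)).Q (G.vals χ v₀) = 0 := rfl
        have hQ : (delta'Cond (G.Endpts v₀) α₀').Q (G.vals χ v₀)
            = 1 / α₀' * ‖∑ p, G.vals χ v₀ p‖ ^ 2 := rfl
        rw [hQ0, hQ, hsum0]
        simp
      have hsub : G.raySet vc0 ψfam ⊆ G.raySet vcA' φ := by
        rintro q ⟨χ, hsp, hne, rfl⟩
        exact ⟨χ, (hspan hsp).1, hne, by rw [hformeq χ hsp]⟩
      have hne' : (G.raySet vc0 ψfam).Nonempty :=
        ⟨_, ⟨ψfam ⟨0, hk⟩, Submodule.subset_span (Set.mem_range_self _),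
          hliψ.ne_zero _, rfl⟩⟩
      have hle : sSup (G.raySet vc0 ψfam) ≤ sSup (G.raySet vcA' φ) :=
        csSup_le_csSup hbd hne' hsub
      have hmem' : sSup (G.raySet vc0 ψfam) ∈ G.lamSet vc0 k := ⟨ψfam, hliψ, hdomψ, rfl⟩
      exact (csInf_le (G.lamSet_bddBelow vc0 hk) hmem').trans hle
    · rw [Real.sSup_of_not_bddAbove hbd]
      exact csInf_le (G.lamSet_bddBelow vc0 hk) (G.ghost_mem_lamSet vc0 hk)

end
end

section
/- Let T be a compact metric tree (a finite connected metric graph with no cycles, i.e., first Betti number 0) with total length L(T) and with at least two pendant edges, where a pendant edge is an edge incident to a vertex of degree one, and let |E_p| denote the number of pendant edges of T. Then 2·L(T)/|E_p| ≤ d(T), where d(T) = max{dist(x, y) : x, y ∈ T} is the diameter of T with respect to the path metric on T. -/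
noncomputable section
open scoped Classical
open MeasureTheory Finset

/-- `G.WalkLen v w L` holds if there is a walk along whole edges of `G` from the vertex
`v` to the vertex `w` of total length `L`. -/
inductive MetricGraph.WalkLen (G : MetricGraph) : G.V → G.V → ℝ → Prop
  | nil (v : G.V) : MetricGraph.WalkLen G v v 0
  | cons (e : G.E) (b : Bool) {w : G.V} {L : ℝ} :
      MetricGraph.WalkLen G (G.ends (e, !b)) w L →
      MetricGraph.WalkLen G (G.ends (e, b)) w (G.ℓ e + L)

namespace MetricGraph

/-- A point of the metric graph: an edge together with a coordinate in `[0, ℓ e]`. -/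
def IsPoint (G : MetricGraph) (p : G.E × ℝ) : Prop := p.2 ∈ Set.Icc 0 (G.ℓ p.1)

/-- The distance from a point on an edge to the endpoint `b` of that edge. -/
def toEndDist (G : MetricGraph) (p : G.E × ℝ) (b : Bool) : ℝ :=
  if b then G.ℓ p.1 - p.2 else p.2

/-- The path distance between two points of the metric graph: the infimum of lengths of
paths joining them, each path either staying on a common edge or running from the first
point to an endpoint of its edge, walking along whole edges, and entering the second
point's edge from one of its endpoints. -/
def ptDist (G : MetricGraph) (p q : G.E × ℝ) : ℝ :=
  sInf ({r | p.1 = q.1 ∧ r = |p.2 - q.2|} ∪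
    {r | ∃ (b b' : Bool) (L : ℝ), G.WalkLen (G.ends (p.1, b)) (G.ends (q.1, b')) L ∧
      r = G.toEndDist p b + L + G.toEndDist q b'})

/-- The diameter of the metric graph: the supremum of distances between its points. -/
def diam (G : MetricGraph) : ℝ :=
  sSup {r | ∃ p q : G.E × ℝ, G.IsPoint p ∧ G.IsPoint q ∧ r = G.ptDist p q}

/-- A pendant edge: an edge incident to a vertex of degree one. -/
def IsPendantEdge (G : MetricGraph) (e : G.E) : Prop :=
  ∃ b : Bool, G.degree (G.ends (e, b)) = 1

/-- The number of pendant edges. -/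
def pendantCount (G : MetricGraph) : ℕ :=
  (Finset.univ.filter fun e : G.E => G.IsPendantEdge e).card

end MetricGraph



theorem conn_card_le {V : Type} [Fintype V] (Sg : SimpleGraph V) [Fintype Sg.edgeSet] (h : Sg.Connected) :
    Fintype.card V ≤ Sg.edgeFinset.card + 1 := by
  obtain ⟨root⟩ := h.nonempty
  have step : ∀ v : V, v ≠ root → ∃ x, Sg.Adj v x ∧ Sg.dist x root < Sg.dist v root := by
    intro v hv
    obtain ⟨p, hp⟩ := h.exists_walk_length_eq_dist v root
    have hd : 0 < Sg.dist v root := h.pos_dist_of_ne hv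
    cases p with
    | nil => exact absurd rfl hv
    | cons hadj q =>
        refine ⟨_, hadj, ?_⟩
        have := SimpleGraph.dist_le q
        simp [SimpleGraph.Walk.length_cons] at hp
        omega
  choose nxt hadj hdist using step
  have hne : Nonempty (Sym2 V) := ⟨s(root, root)⟩
  set φ : V → Sym2 V := fun v => if hv : v = root then Classical.arbitrary (Sym2 V)
    else s(v, nxt v hv) with hφ
  have hinj : Set.InjOn φ ((Finset.univ.erase root) : Finset V) := by
    intro a ha b hb hab
    simp only [Finset.coe_erase, Set.mem_diff, Finset.mem_coe, Finset.coe_univ] at ha hb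
    have ha' : a ≠ root := by simpa using ha.2
    have hb' : b ≠ root := by simpa using hb.2
    simp only [hφ, dif_neg ha', dif_neg hb', Sym2.eq_iff] at hab
    rcases hab with ⟨rfl, _⟩ | ⟨h1, h2⟩
    · rfl
    · exfalso
      have := hdist a ha'
      have := hdist b hb'
      rw [← h1, ← h2] at *
      omega
  have hmap : ∀ v ∈ (Finset.univ.erase root), φ v ∈ Sg.edgeFinset := by
    intro v hv
    have hv' : v ≠ root := by simpa using hv
    simp only [hφ, dif_neg hv', SimpleGraph.mem_edgeFinset, SimpleGraph.mem_edgeSet]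
    exact hadj v hv'
  have hle := Finset.card_le_card_of_injOn φ hmap hinj
  have hcard : (Finset.univ.erase root).card = Fintype.card V - 1 := by
    simp [Finset.card_erase_of_mem]
  have h2 : Fintype.card V - 1 ≤ Sg.edgeFinset.card := by rw [← hcard]; exact hle
  have hpos : 0 < Fintype.card V := Fintype.card_pos_iff.mpr ⟨root⟩
  omega

namespace TreeAux

open MetricGraph

variable (G : MetricGraph)

/-- Adjacency avoiding a given edge `f`. -/
def AdjM (f : G.E) (v w : G.V) : Prop :=
  ∃ p : G.E × Bool, p.1 ≠ f ∧ G.ends p = v ∧ G.ends (p.1, !p.2) = w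

lemma adjM_symm {G : MetricGraph} {f : G.E} {v w : G.V} (h : AdjM G f v w) : AdjM G f w v := by
  obtain ⟨p, hp, h1, h2⟩ := h
  exact ⟨(p.1, !p.2), hp, h2, by simpa using h1⟩

/-- The side of the edge `f` containing the endpoint `b`. -/
def Side (f : G.E) (b : Bool) (z : G.V) : Prop :=
  Relation.ReflTransGen (AdjM G f) (G.ends (f, b)) z

lemma side_trans {G : MetricGraph} {f : G.E} {b : Bool} {y z : G.V}
    (h : Side G f b y) (h2 : Relation.ReflTransGen (AdjM G f) y z) : Side G f b z :=
  h.trans h2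

lemma reach_symm {G : MetricGraph} {f : G.E} {y z : G.V}
    (h : Relation.ReflTransGen (AdjM G f) y z) : Relation.ReflTransGen (AdjM G f) z y := by
  induction h with
  | refl => exact .refl
  | tail h1 h2 ih => exact Relation.ReflTransGen.head (adjM_symm h2) ih

lemma walklen_nonneg {G : MetricGraph} {v w : G.V} {L : ℝ} (h : G.WalkLen v w L) : 0 ≤ L := by
  induction h with
  | nil => exact le_refl 0
  | cons e b h ih => have := (G.ℓ_pos e).le; linarith

lemma walklen_trans {G : MetricGraph} {v w u : G.V} {L1 L2 : ℝ}
    (h1 : G.WalkLen v w L1) (h2 : G.WalkLen w u L2) : G.WalkLen v u (L1 + L2) := by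
  induction h1 with
  | nil v => simpa using h2
  | cons e c h ih =>
      have := MetricGraph.WalkLen.cons e c (ih h2)
      simpa [add_assoc] using this

lemma exists_walk {G : MetricGraph} (hG : G.Connected) (v w : G.V) :
    ∃ L, 0 ≤ L ∧ G.WalkLen v w L := by
  have h := hG v w
  induction h with
  | refl => exact ⟨0, le_refl 0, .nil v⟩
  | tail h1 h2 ih =>
      obtain ⟨L, hL, hw⟩ := ih
      obtain ⟨⟨e, bb⟩, hp1, hp2⟩ := h2
      have step : G.WalkLen (G.ends (e, bb)) (G.ends (e, !bb)) (G.ℓ e + 0) :=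
        MetricGraph.WalkLen.cons e bb (MetricGraph.WalkLen.nil _)
      rw [hp1, hp2] at step
      exact ⟨L + (G.ℓ e + 0), by have := (G.ℓ_pos e).le; linarith,
        walklen_trans hw step⟩

/-- Bridge property: the two ends of any edge lie on different sides. -/
lemma bridge {G : MetricGraph} (hG : G.Connected)
    (htree : Fintype.card G.E + 1 = Fintype.card G.V) (f : G.E) (c : Bool) :
    ¬ Side G f c (G.ends (f, !c)) := by
  intro hreach
  set Sg : SimpleGraph G.V :=
    { Adj := fun v w => v ≠ w ∧ AdjM G f v w,
      symm := ⟨fun v w h => ⟨h.1.symm, adjM_symm h.2⟩⟩,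
      loopless := ⟨fun v h => h.1 rfl⟩ } with hSg
  have hSgAdj : ∀ v w : G.V, Sg.Adj v w ↔ (v ≠ w ∧ AdjM G f v w) := fun _ _ => Iff.rfl
  have reach_to_Sg : ∀ {v w : G.V}, Relation.ReflTransGen (AdjM G f) v w → Sg.Reachable v w := by
    intro v w h
    induction h with
    | refl => exact SimpleGraph.Reachable.refl _
    | tail hr hadj ih =>
        rename_i y z
        by_cases hyz : y = z
        · exact hyz ▸ ih
        · exact ih.trans (SimpleGraph.Adj.reachable ((hSgAdj y z).mpr ⟨hyz, hadj⟩))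
  have hpre : Sg.Preconnected := by
    intro v w
    have h := hG v w
    induction h with
    | refl => exact SimpleGraph.Reachable.refl _
    | tail hr hadj ih =>
        rename_i y z
        obtain ⟨⟨pe, pb⟩, hp1, hp2⟩ := hadj
        by_cases hpf : pe = f
        · subst hpf
          have hstep : Sg.Reachable (G.ends (pe, pb)) (G.ends (pe, !pb)) := by
            by_cases hc : pb = c
            · rw [hc]; exact reach_to_Sg hreach
            · have hc' : pb = !c := by cases pb <;> cases c <;> simp_all
              rw [hc']
              have := reach_to_Sg (reach_symm hreach)
              simpa using this
          rw [hp1] at hstep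
          rw [show G.ends (pe, !pb) = z from hp2] at hstep
          exact ih.trans hstep
        · by_cases hyz : y = z
          · exact hyz ▸ ih
          · refine ih.trans (SimpleGraph.Adj.reachable ((hSgAdj y z).mpr ⟨hyz, ?_⟩))
            exact ⟨(pe, pb), hpf, hp1, hp2⟩
  haveI hVne : Nonempty G.V := ⟨G.ends (Classical.arbitrary G.E, false)⟩
  have hconn : Sg.Connected := SimpleGraph.Connected.mk hpre
  have hcount := conn_card_le Sg hconn
  -- now bound the number of simple edges by |E| - 1
  have hmem : ∀ ε ∈ Sg.edgeFinset, ∃ q : G.E × Bool, q.1 ≠ f ∧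
      ε = s(G.ends q, G.ends (q.1, !q.2)) := by
    intro ε hε
    induction ε with
    | _ v w =>
        rw [SimpleGraph.mem_edgeFinset, SimpleGraph.mem_edgeSet] at hε
        obtain ⟨hne, p, hp1, hpv, hpw⟩ := hε
        exact ⟨p, hp1, by rw [hpv, hpw]⟩
  set φ : Sym2 G.V → G.E := fun ε =>
    if h : ∃ q : G.E × Bool, q.1 ≠ f ∧ ε = s(G.ends q, G.ends (q.1, !q.2))
    then h.choose.1 else f with hφ
  have hcanon : ∀ (a : G.E) (b : Bool), s(G.ends (a, b), G.ends (a, !b)) =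
      s(G.ends (a, false), G.ends (a, true)) := by
    intro a b
    cases b
    · rfl
    · exact Sym2.eq_swap
  have hmap : ∀ ε ∈ Sg.edgeFinset, φ ε ∈ Finset.univ.erase f := by
    intro ε hε
    simp only [hφ]
    rw [dif_pos (hmem ε hε)]
    exact Finset.mem_erase.mpr ⟨(hmem ε hε).choose_spec.1, Finset.mem_univ _⟩
  have hinj : Set.InjOn φ (Sg.edgeFinset : Set (Sym2 G.V)) := by
    intro ε1 h1 ε2 h2 heq
    have hm1 := hmem ε1 (by simpa using h1)
    have hm2 := hmem ε2 (by simpa using h2)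
    rw [hφ] at heq
    simp only [dif_pos hm1, dif_pos hm2] at heq
    have e1 := hm1.choose_spec.2
    have e2 := hm2.choose_spec.2
    rw [e1, e2, hcanon, hcanon, heq]
  have hle := Finset.card_le_card_of_injOn φ hmap hinj
  have herase : (Finset.univ.erase f).card = Fintype.card G.E - 1 := by
    simp [Finset.card_erase_of_mem]
  have hEpos : 0 < Fintype.card G.E := Fintype.card_pos
  rw [herase] at hle
  omega

lemma side_disjoint {G : MetricGraph} (hG : G.Connected)
    (htree : Fintype.card G.E + 1 = Fintype.card G.V) {f : G.E} {z : G.V}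
    (h1 : Side G f false z) (h2 : Side G f true z) : False := by
  have : Side G f false (G.ends (f, true)) := side_trans h1 (reach_symm h2)
  exact bridge hG htree f false this

lemma no_loop {G : MetricGraph} (hG : G.Connected)
    (htree : Fintype.card G.E + 1 = Fintype.card G.V) (f : G.E) (c : Bool) :
    G.ends (f, c) ≠ G.ends (f, !c) := by
  intro h
  exact bridge hG htree f c (h ▸ Relation.ReflTransGen.refl)

lemma side_edge_iff {G : MetricGraph} {f e : G.E} {b c : Bool} (hef : e ≠ f) :
    (Side G f b (G.ends (e, c)) ↔ Side G f b (G.ends (e, !c))) := by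
  constructor
  · intro h; exact h.tail ⟨(e, c), hef, rfl, rfl⟩
  · intro h; exact h.tail ⟨(e, !c), hef, rfl, by simp⟩

/-- The degree-one end of a pendant edge (or `false` junk value). -/
def leafEnd (e : G.E) : Bool :=
  if h : G.IsPendantEdge e then h.choose else false

lemma leafEnd_spec {G : MetricGraph} {e : G.E} (h : G.IsPendantEdge e) :
    G.degree (G.ends (e, leafEnd G e)) = 1 := by
  rw [leafEnd, dif_pos h]; exact h.choose_spec

/-- Two degree-one ends on the same edge are impossible (when `2 ≤ |E|`). -/
lemma not_both_ends_deg_one {G : MetricGraph} (hG : G.Connected)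
    (hE : 2 ≤ Fintype.card G.E) {e : G.E}
    (h1 : G.degree (G.ends (e, false)) = 1) (h2 : G.degree (G.ends (e, true)) = 1) :
    False := by
  have huniq : ∀ (b : Bool), G.degree (G.ends (e, b)) = 1 →
      ∀ q : G.E × Bool, G.ends q = G.ends (e, b) → q = (e, b) := by
    intro b hb q hq
    have hle : Fintype.card (G.Endpts (G.ends (e, b))) ≤ 1 := le_of_eq hb
    have := Fintype.card_le_one_iff.mp hle ⟨q, hq⟩ ⟨(e, b), rfl⟩
    exact congrArg Subtype.val this
  obtain ⟨e', he'⟩ := Fintype.exists_ne_of_one_lt_card (by omega) e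
  have key : ∀ w, Relation.ReflTransGen G.Adj (G.ends (e, false)) w →
      w = G.ends (e, false) ∨ w = G.ends (e, true) := by
    intro w hw
    induction hw with
    | refl => exact Or.inl rfl
    | tail hr hadj ih =>
        obtain ⟨p, hp1, hp2⟩ := hadj
        rcases ih with h | h
        · rw [h] at hp1
          have := huniq false h1 p hp1
          subst this
          exact Or.inr hp2.symm
        · rw [h] at hp1
          have := huniq true h2 p hp1
          subst this
          simpa using Or.inl hp2.symm
  have hreach := hG (G.ends (e, false)) (G.ends (e', false))
  have hcases := key _ hreach
  have : ∀ b : Bool, G.ends (e', false) = G.ends (e, b) → False := by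
    intro b hb
    have hd : G.degree (G.ends (e, b)) = 1 := by cases b; exact h1; exact h2
    have := huniq b hd (e', false) hb
    exact he' (congrArg Prod.fst this)
  rcases hcases with h | h
  · exact this false h
  · exact this true h

lemma leafEnd_eq {G : MetricGraph} (hG : G.Connected) (hE : 2 ≤ Fintype.card G.E)
    {e : G.E} {b : Bool} (h : G.degree (G.ends (e, b)) = 1) : leafEnd G e = b := by
  have hpe : G.IsPendantEdge e := ⟨b, h⟩
  have hs := leafEnd_spec hpe
  by_contra hne
  have : leafEnd G e = !b := by cases b <;> cases hb : leafEnd G e <;> simp_all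
  rw [this] at hs
  cases b
  · exact not_both_ends_deg_one hG hE h (by simpa using hs)
  · exact not_both_ends_deg_one hG hE (by simpa using hs) h

/-- Each side of each edge contains the tip of some pendant edge. -/
lemma side_leaf {G : MetricGraph} (hG : G.Connected)
    (htree : Fintype.card G.E + 1 = Fintype.card G.V) (hE : 2 ≤ Fintype.card G.E)
    (f : G.E) (b : Bool) :
    ∃ e : G.E, G.IsPendantEdge e ∧ Side G f b (G.ends (e, leafEnd G e)) := by
  suffices H : ∀ n : ℕ, ∀ (f : G.E) (b : Bool),
      (Finset.univ.filter fun z => Side G f b z).card ≤ n →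
      ∃ e : G.E, G.IsPendantEdge e ∧ Side G f b (G.ends (e, leafEnd G e)) by
    exact H _ f b le_rfl
  intro n
  induction n with
  | zero =>
      intro f b hcard
      exfalso
      have : G.ends (f, b) ∈ Finset.univ.filter fun z => Side G f b z := by
        exact Finset.mem_filter.mpr ⟨Finset.mem_univ _, Relation.ReflTransGen.refl⟩
      have := Finset.card_pos.mpr ⟨_, this⟩
      omega
  | succ n ih =>
      intro f b hcard
      by_cases hdeg : G.degree (G.ends (f, b)) = 1
      · refine ⟨f, ⟨b, hdeg⟩, ?_⟩
        rw [leafEnd_eq hG hE hdeg]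
        exact Relation.ReflTransGen.refl
      · -- there is another endpoint at `ends (f, b)`
        have h1le : 1 ≤ G.degree (G.ends (f, b)) :=
          Fintype.card_pos_iff.mpr ⟨⟨(f, b), rfl⟩⟩
        have h2le : 1 < G.degree (G.ends (f, b)) := by
          rcases Nat.lt_or_ge 1 (G.degree (G.ends (f, b))) with h | h
          · exact h
          · exact absurd (le_antisymm h h1le) hdeg
        obtain ⟨x, hxne⟩ := Fintype.exists_ne_of_one_lt_card h2le ⟨(f, b), rfl⟩
        obtain ⟨⟨e1, c⟩, hx⟩ := x
        have hpairne : (e1, c) ≠ (f, b) := fun h => hxne (Subtype.ext h)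
        have he1f : e1 ≠ f := by
          intro h
          subst h
          have hc : c = !b := by
            cases c <;> cases b <;> simp_all
          rw [hc] at hx
          exact no_loop hG htree e1 b hx.symm
        -- every vertex on the far side of `e1` is on the `b` side of `f`
        have hsub : ∀ z, Side G e1 (!c) z → Side G f b z := by
          intro z hz
          induction hz with
          | refl =>
              exact Relation.ReflTransGen.tail Relation.ReflTransGen.refl
                ⟨(e1, c), he1f, hx, rfl⟩
          | tail hr hadj ih2 =>
              rename_i y z'
              obtain ⟨⟨qe, qb⟩, hq1, hq2, hq3⟩ := hadj
              have hqef : qe ≠ f := by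
                intro h
                subst h
                -- then y = ends (qe, qb) is an end of f; both ends of f are on the c side of e1
                have hyc : Side G e1 c y := by
                  have hfb : Side G e1 c (G.ends (qe, b)) := hx ▸ Relation.ReflTransGen.refl
                  by_cases hqb : qb = b
                  · rw [← hq2, hqb]; exact hfb
                  · have : qb = !b := by cases qb <;> cases b <;> simp_all
                    rw [← hq2, this]
                    exact hfb.tail ⟨(qe, b), Ne.symm he1f, rfl, rfl⟩
                have hync : Side G e1 (!c) y := hr
                exact absurd (side_trans hyc (reach_symm hync))
                  (by simpa using bridge hG htree e1 c)
              exact ih2.tail ⟨(qe, qb), hqef, hq2, hq3⟩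
        have hnotin : ¬ Side G e1 (!c) (G.ends (f, b)) := by
          intro h
          rw [← hx] at h
          have := bridge hG htree e1 (!c)
          simp only [Bool.not_not] at this
          exact this h
        have hsubset : (Finset.univ.filter fun z => Side G e1 (!c) z) ⊆
            (Finset.univ.filter fun z => Side G f b z).erase (G.ends (f, b)) := by
          intro z hz
          rw [Finset.mem_filter] at hz
          refine Finset.mem_erase.mpr ⟨?_, Finset.mem_filter.mpr ⟨Finset.mem_univ _, hsub z hz.2⟩⟩
          intro h
          exact hnotin (h ▸ hz.2)
        have hmem : G.ends (f, b) ∈ Finset.univ.filter fun z => Side G f b z := by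
          exact Finset.mem_filter.mpr ⟨Finset.mem_univ _, Relation.ReflTransGen.refl⟩
        have hcard' : (Finset.univ.filter fun z => Side G e1 (!c) z).card ≤ n := by
          have := Finset.card_le_card hsubset
          have h2 := Finset.card_erase_of_mem hmem
          omega
        obtain ⟨e, he, hside⟩ := ih e1 (!c) hcard'
        exact ⟨e, he, hsub _ hside⟩

/-- Crossing distance between vertices. -/
def Dv (x w : G.V) : ℝ :=
  ∑ f : G.E, if (Side G f false x ↔ Side G f false w) then 0 else G.ℓ f

lemma Dv_nonneg_term {G : MetricGraph} (f : G.E) (P : Prop) :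
    (0:ℝ) ≤ if P then 0 else G.ℓ f := by
  split
  · exact le_refl 0
  · exact (G.ℓ_pos f).le

lemma Dv_self {G : MetricGraph} (x : G.V) : Dv G x x = 0 := by
  simp [Dv]

lemma Dv_symm {G : MetricGraph} (x w : G.V) : Dv G x w = Dv G w x := by
  unfold Dv
  refine Finset.sum_congr rfl fun f _ => ?_
  by_cases h : Side G f false x ↔ Side G f false w
  · rw [if_pos h, if_pos h.symm]
  · rw [if_neg h, if_neg fun h' => h h'.symm]

lemma Dv_triangle {G : MetricGraph} (x y z : G.V) : Dv G x z ≤ Dv G x y + Dv G y z := by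
  unfold Dv
  rw [← Finset.sum_add_distrib]
  refine Finset.sum_le_sum fun f _ => ?_
  have hL : (if (Side G f false x ↔ Side G f false z) then (0:ℝ) else G.ℓ f) ≤ G.ℓ f := by
    split
    · exact (G.ℓ_pos f).le
    · exact le_refl _
  have n1 := Dv_nonneg_term (G := G) f (Side G f false x ↔ Side G f false y)
  have n2 := Dv_nonneg_term (G := G) f (Side G f false y ↔ Side G f false z)
  by_cases h1 : Side G f false x ↔ Side G f false y
  · by_cases h2 : Side G f false y ↔ Side G f false z
    · rw [if_pos h1, if_pos h2, if_pos (h1.trans h2)]; norm_num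
    · rw [if_pos h1, if_neg h2]
      have hL2 : (if (Side G f false x ↔ Side G f false z) then (0:ℝ) else G.ℓ f) ≤ G.ℓ f := hL
      linarith
  · by_cases h2 : Side G f false y ↔ Side G f false z
    · rw [if_neg h1, if_pos h2]; linarith
    · rw [if_neg h1, if_neg h2]; have := (G.ℓ_pos f).le; linarith

lemma Dv_end_le {G : MetricGraph} (e : G.E) (c : Bool) (w : G.V) :
    Dv G (G.ends (e, c)) w ≤ G.ℓ e + Dv G (G.ends (e, !c)) w := by
  unfold Dv
  have : ∀ f : G.E, (if (Side G f false (G.ends (e, c)) ↔ Side G f false w) then (0:ℝ)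
      else G.ℓ f) ≤ (if f = e then G.ℓ e else 0) +
      (if (Side G f false (G.ends (e, !c)) ↔ Side G f false w) then (0:ℝ) else G.ℓ f) := by
    intro f
    by_cases hfe : f = e
    · subst hfe
      rw [if_pos rfl]
      have hp := (G.ℓ_pos f).le
      by_cases hA : Side G f false (G.ends (f, c)) ↔ Side G f false w
      · rw [if_pos hA]
        by_cases hB : Side G f false (G.ends (f, !c)) ↔ Side G f false w
        · rw [if_pos hB]; linarith
        · rw [if_neg hB]; linarith
      · rw [if_neg hA]
        by_cases hB : Side G f false (G.ends (f, !c)) ↔ Side G f false w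
        · rw [if_pos hB]; linarith
        · rw [if_neg hB]; linarith
    · rw [if_neg hfe]
      have hiff := side_edge_iff (G := G) (f := f) (b := false) (c := c) (fun h => hfe h.symm)
      by_cases h : Side G f false (G.ends (e, c)) ↔ Side G f false w
      · rw [if_pos h, if_pos (hiff.symm.trans h)]; norm_num
      · rw [if_neg h, if_neg (fun h' => h (hiff.trans h'))]; norm_num
  calc ∑ f : G.E, (if (Side G f false (G.ends (e, c)) ↔ Side G f false w) then (0:ℝ) else G.ℓ f)
      ≤ ∑ f : G.E, ((if f = e then G.ℓ e else 0) +
        (if (Side G f false (G.ends (e, !c)) ↔ Side G f false w) then (0:ℝ) else G.ℓ f)) :=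
        Finset.sum_le_sum fun f _ => this f
    _ = G.ℓ e + ∑ f : G.E, (if (Side G f false (G.ends (e, !c)) ↔ Side G f false w)
        then (0:ℝ) else G.ℓ f) := by
        rw [Finset.sum_add_distrib, Finset.sum_ite_eq' Finset.univ e (fun _ => G.ℓ e)]
        simp

lemma Dv_walk_le {G : MetricGraph} {x w' : G.V} {L : ℝ} (h : G.WalkLen x w' L) (w : G.V) :
    Dv G x w ≤ L + Dv G w' w := by
  induction h with
  | nil v => simp
  | cons e c h ih =>
      have h2 := Dv_end_le (G := G) e c w
      linarith


/-- Coordinate of the tip of a pendant edge. -/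
def tipc (e : G.E) : ℝ := if leafEnd G e then G.ℓ e else 0

/-- The tip vertex of a pendant edge. -/
def tipv (e : G.E) : G.V := G.ends (e, leafEnd G e)

lemma tip_isPoint {G : MetricGraph} (e : G.E) : G.IsPoint (e, tipc G e) := by
  unfold MetricGraph.IsPoint tipc
  constructor
  · split
    · exact (G.ℓ_pos e).le
    · exact le_refl 0
  · split
    · exact le_refl _
    · exact (G.ℓ_pos e).le

lemma toEnd_tip {G : MetricGraph} (e : G.E) (b : Bool) :
    G.toEndDist (e, tipc G e) b = if b = leafEnd G e then 0 else G.ℓ e := by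
  unfold MetricGraph.toEndDist tipc
  cases b <;> cases h : leafEnd G e <;> simp [h]

lemma Dv_tip_end {G : MetricGraph} (e : G.E) (b : Bool) :
    Dv G (tipv G e) (G.ends (e, b)) ≤ G.toEndDist (e, tipc G e) b := by
  rw [toEnd_tip]
  by_cases hb : b = leafEnd G e
  · rw [if_pos hb, hb]
    exact le_of_eq (Dv_self _)
  · rw [if_neg hb]
    have hb' : leafEnd G e = !b := by
      cases b <;> cases h : leafEnd G e <;> simp_all
    have h := Dv_end_le (G := G) e (!b) (G.ends (e, b))
    simp only [Bool.not_not] at h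
    rw [Dv_self] at h
    unfold tipv
    rw [hb']
    linarith

lemma ptdist_tips_ge {G : MetricGraph} (hG : G.Connected)
    (htree : Fintype.card G.E + 1 = Fintype.card G.V) {e e' : G.E} (hne : e ≠ e') :
    Dv G (tipv G e) (tipv G e') ≤ G.ptDist (e, tipc G e) (e', tipc G e') := by
  unfold MetricGraph.ptDist
  apply le_csInf
  · obtain ⟨L, hL0, hW⟩ := exists_walk hG (G.ends (e, false)) (G.ends (e', false))
    exact ⟨_, Or.inr ⟨false, false, L, hW, rfl⟩⟩
  · rintro r (⟨h1, h2⟩ | ⟨b, b', L, hW, rfl⟩)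
    · exact absurd h1 hne
    · have hW' : G.WalkLen (G.ends (e, b)) (G.ends (e', b')) L := hW
      have t1 := Dv_triangle (G := G) (tipv G e) (G.ends (e, b)) (tipv G e')
      have t2 := Dv_walk_le (G := G) hW' (tipv G e')
      have t3 := Dv_tip_end (G := G) e b
      have t4 := Dv_tip_end (G := G) e' b'
      have t5 : Dv G (G.ends (e', b')) (tipv G e') = Dv G (tipv G e') (G.ends (e', b')) :=
        Dv_symm _ _
      have h1 : G.toEndDist ((e, tipc G e) : G.E × ℝ) b = G.toEndDist (e, tipc G e) b := rfl
      have h2 : G.toEndDist ((e', tipc G e') : G.E × ℝ) b' = G.toEndDist (e', tipc G e') b' := rfl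
      linarith

lemma toEnd_nonneg {G : MetricGraph} {p : G.E × ℝ} (hp : G.IsPoint p) (b : Bool) :
    0 ≤ G.toEndDist p b := by
  unfold MetricGraph.toEndDist
  obtain ⟨h1, h2⟩ := hp
  split
  · linarith
  · exact h1

/-- A chosen walk length between two vertices. -/
def wlen {G : MetricGraph} (hG : G.Connected) (v w : G.V) : ℝ := (exists_walk hG v w).choose

lemma wlen_nonneg {G : MetricGraph} (hG : G.Connected) (v w : G.V) : 0 ≤ wlen hG v w :=
  (exists_walk hG v w).choose_spec.1

lemma wlen_walk {G : MetricGraph} (hG : G.Connected) (v w : G.V) :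
    G.WalkLen v w (wlen hG v w) := (exists_walk hG v w).choose_spec.2

/-- A uniform upper bound for point distances. -/
def Cbound {G : MetricGraph} (hG : G.Connected) : ℝ :=
  2 * G.totalLength + ∑ v : G.V, ∑ w : G.V, wlen hG v w

lemma ell_le_total {G : MetricGraph} (e : G.E) : G.ℓ e ≤ G.totalLength :=
  Finset.single_le_sum (fun i _ => (G.ℓ_pos i).le) (Finset.mem_univ e)

lemma wlen_le_sum {G : MetricGraph} (hG : G.Connected) (v w : G.V) :
    wlen hG v w ≤ ∑ v : G.V, ∑ w : G.V, wlen hG v w := by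
  have h1 : wlen hG v w ≤ ∑ w' : G.V, wlen hG v w' :=
    Finset.single_le_sum (fun i _ => wlen_nonneg hG v i) (Finset.mem_univ w)
  have h2 : ∑ w' : G.V, wlen hG v w' ≤ ∑ v' : G.V, ∑ w' : G.V, wlen hG v' w' :=
    Finset.single_le_sum (fun i _ => Finset.sum_nonneg fun j _ => wlen_nonneg hG i j)
      (Finset.mem_univ v)
  linarith

lemma ptdist_le_bound {G : MetricGraph} (hG : G.Connected) {p q : G.E × ℝ}
    (hp : G.IsPoint p) (hq : G.IsPoint q) : G.ptDist p q ≤ Cbound hG := by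
  unfold MetricGraph.ptDist
  have hbdd : BddBelow ({r | p.1 = q.1 ∧ r = |p.2 - q.2|} ∪
      {r | ∃ (b b' : Bool) (L : ℝ), G.WalkLen (G.ends (p.1, b)) (G.ends (q.1, b')) L ∧
        r = G.toEndDist p b + L + G.toEndDist q b'}) := by
    refine ⟨0, ?_⟩
    rintro r (⟨h1, h2⟩ | ⟨b, b', L, hW, rfl⟩)
    · rw [h2]; exact abs_nonneg _
    · have := walklen_nonneg hW
      have := toEnd_nonneg hp b
      have := toEnd_nonneg hq b'
      linarith
  have hmem : G.toEndDist p false + wlen hG (G.ends (p.1, false)) (G.ends (q.1, false)) +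
      G.toEndDist q false ∈ ({r | p.1 = q.1 ∧ r = |p.2 - q.2|} ∪
      {r | ∃ (b b' : Bool) (L : ℝ), G.WalkLen (G.ends (p.1, b)) (G.ends (q.1, b')) L ∧
        r = G.toEndDist p b + L + G.toEndDist q b'} : Set ℝ) :=
    Or.inr ⟨false, false, _, wlen_walk hG _ _, rfl⟩
  refine le_trans (csInf_le hbdd hmem) ?_
  have h1 : G.toEndDist p false = p.2 := rfl
  have h2 : G.toEndDist q false = q.2 := rfl
  have h3 : p.2 ≤ G.ℓ p.1 := hp.2
  have h4 : q.2 ≤ G.ℓ q.1 := hq.2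
  have h5 := ell_le_total (G := G) p.1
  have h6 := ell_le_total (G := G) q.1
  have h7 := wlen_le_sum hG (G.ends (p.1, false)) (G.ends (q.1, false))
  unfold Cbound
  rw [h1, h2]
  linarith

lemma diam_bddAbove {G : MetricGraph} (hG : G.Connected) :
    BddAbove {r | ∃ p q : G.E × ℝ, G.IsPoint p ∧ G.IsPoint q ∧ r = G.ptDist p q} := by
  refine ⟨Cbound hG, ?_⟩
  rintro r ⟨p, q, hp, hq, rfl⟩
  exact ptdist_le_bound hG hp hq

lemma ptdist_le_diam {G : MetricGraph} (hG : G.Connected) {p q : G.E × ℝ}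
    (hp : G.IsPoint p) (hq : G.IsPoint q) : G.ptDist p q ≤ G.diam := by
  exact le_csSup (diam_bddAbove hG) ⟨p, q, hp, hq, rfl⟩

/-- In a cyclic sequence of propositions taking both truth values, there are at least two
changes. -/
lemma cyclic_changes {n : ℕ} [NeZero n] (Q : ZMod n → Prop) (i0 i1 : ZMod n)
    (h0 : Q i0) (h1 : ¬ Q i1) :
    2 ≤ (Finset.univ.filter fun i => ¬ (Q i ↔ Q (i + 1))).card := by
  set x : ZMod n → ℤ := fun i => if Q i then 1 else 0 with hx
  have htel : ∑ i : ZMod n, (x (i + 1) - x i) = 0 := by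
    rw [Finset.sum_sub_distrib]
    have : ∑ i : ZMod n, x (i + 1) = ∑ i : ZMod n, x i :=
      Fintype.sum_equiv (Equiv.addRight 1) _ _ (fun i => rfl)
    rw [this, sub_self]
  set P := Finset.univ.filter fun i => ¬ (Q i ↔ Q (i + 1)) with hP
  by_contra hlt
  push_neg at hlt
  interval_cases h : P.card
  · -- no changes: Q is constant
    have hall : ∀ i : ZMod n, (Q i ↔ Q (i + 1)) := by
      intro i
      by_contra hcon
      have : i ∈ P := Finset.mem_filter.mpr ⟨Finset.mem_univ _, hcon⟩
      rw [Finset.card_eq_zero.mp h] at this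
      simp at this
    have hconst : ∀ k : ℕ, (Q (i0 + k) ↔ Q i0) := by
      intro k
      induction k with
      | zero => simp
      | succ k ih =>
          have : (i0 + (k:ZMod n)) + 1 = i0 + ((k+1 : ℕ) : ZMod n) := by push_cast; ring
          rw [← this]
          exact (hall (i0 + k)).symm.trans ih
    have : Q i1 := by
      have hk : i0 + (((i1 - i0).val : ℕ) : ZMod n) = i1 := by
        rw [ZMod.natCast_rightInverse (i1 - i0)]
        ring
      rw [← hk]
      exact (hconst (i1 - i0).val).mpr h0
    exact h1 this
  · -- exactly one change
    obtain ⟨j, hj⟩ := Finset.card_eq_one.mp h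
    have hsum : ∑ i : ZMod n, (x (i + 1) - x i) = x (j + 1) - x j := by
      rw [← Finset.sum_filter_add_sum_filter_not Finset.univ
        (fun i => ¬ (Q i ↔ Q (i + 1))) (fun i => x (i + 1) - x i)]
      have hzero : ∑ i ∈ Finset.univ.filter (fun i => ¬¬ (Q i ↔ Q (i + 1))),
          (x (i + 1) - x i) = 0 := by
        apply Finset.sum_eq_zero
        intro i hi
        rw [Finset.mem_filter] at hi
        have hiff := not_not.mp hi.2
        simp only [hx]
        by_cases hQ : Q i
        · rw [if_pos hQ, if_pos (hiff.mp hQ)]; ring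
        · rw [if_neg hQ, if_neg (fun h' => hQ (hiff.mpr h'))]; ring
      rw [hzero, add_zero]
      rw [← hP, hj, Finset.sum_singleton]
    have hjP : j ∈ P := by rw [hj]; exact Finset.mem_singleton_self j
    have hjne := (Finset.mem_filter.mp hjP).2
    rw [htel] at hsum
    simp only [hx] at hsum
    by_cases hQ : Q j
    · have : ¬ Q (j + 1) := fun h' => hjne ⟨fun _ => h', fun _ => hQ⟩
      rw [if_pos hQ, if_neg this] at hsum
      norm_num at hsum
    · have : Q (j + 1) := by
        by_contra h'
        exact hjne ⟨fun h'' => absurd h'' hQ, fun h'' => absurd h'' h'⟩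
      rw [if_neg hQ, if_pos this] at hsum
      norm_num at hsum

end TreeAux

/-- For a compact metric tree `T` (connected, first Betti number `0`)
with at least two pendant edges, `2 L(T) / |E_p| ≤ d(T)`, where `|E_p|` is the number of
pendant edges and `d(T)` the diameter of `T` in the path metric. -/
theorem tree_diameter_lower_bound (G : MetricGraph) (hG : G.Connected)
    (htree : Fintype.card G.E + 1 = Fintype.card G.V)
    (hp : 2 ≤ G.pendantCount) :
    2 * G.totalLength / (G.pendantCount : ℝ) ≤ G.diam := by
  classical
  open TreeAux in
  set p := G.pendantCount with hpdef
  have hE2 : 2 ≤ Fintype.card G.E := by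
    have h1 : G.pendantCount ≤ Fintype.card G.E := by
      unfold MetricGraph.pendantCount
      exact le_trans (Finset.card_filter_le _ _) (le_of_eq (Finset.card_univ))
    omega
  haveI : NeZero p := ⟨by omega⟩
  haveI : Fact (1 < p) := ⟨by omega⟩
  set s : Finset G.E := Finset.univ.filter (fun e : G.E => G.IsPendantEdge e) with hs
  have hcards : Fintype.card {x // x ∈ s} = p := by
    rw [Fintype.card_coe]
    rfl
  let v : ZMod p ≃ {x // x ∈ s} := Fintype.equivOfCardEq (by rw [ZMod.card, hcards])
  let u : ZMod p → G.V := fun i => tipv G ((v i : {x // x ∈ s}) : G.E)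
  have hvne : ∀ i : ZMod p, ((v i : {x // x ∈ s}) : G.E) ≠ (v (i + 1) : {x // x ∈ s}) := by
    intro i h
    have h2 : v i = v (i + 1) := Subtype.ext h
    have h3 : i = i + 1 := v.injective h2
    have : (1 : ZMod p) = 0 := by
      have := congrArg (fun x => x - i) h3
      simpa using this.symm
    exact one_ne_zero this
  have hdiam : ∀ i : ZMod p, Dv G (u i) (u (i + 1)) ≤ G.diam := by
    intro i
    refine le_trans (ptdist_tips_ge hG htree (hvne i)) ?_
    exact ptdist_le_diam hG (tip_isPoint _) (tip_isPoint _)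
  have hmain : 2 * G.totalLength ≤ ∑ i : ZMod p, Dv G (u i) (u (i + 1)) := by
    unfold Dv
    rw [Finset.sum_comm]
    unfold MetricGraph.totalLength
    rw [Finset.mul_sum]
    refine Finset.sum_le_sum fun f _ => ?_
    obtain ⟨e0, he0, hs0⟩ := side_leaf hG htree hE2 f false
    obtain ⟨e1, he1, hs1⟩ := side_leaf hG htree hE2 f true
    have hm0 : e0 ∈ s := Finset.mem_filter.mpr ⟨Finset.mem_univ _, he0⟩
    have hm1 : e1 ∈ s := Finset.mem_filter.mpr ⟨Finset.mem_univ _, he1⟩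
    set Q : ZMod p → Prop := fun i => Side G f false (u i) with hQ
    have hQ0 : Q (v.symm ⟨e0, hm0⟩) := by
      have hthis : u (v.symm ⟨e0, hm0⟩) = tipv G e0 := by
        show tipv G ((v (v.symm ⟨e0, hm0⟩) : {x // x ∈ s}) : G.E) = tipv G e0
        rw [Equiv.apply_symm_apply]
      show Side G f false (u (v.symm ⟨e0, hm0⟩))
      rw [hthis]
      exact hs0
    have hQ1 : ¬ Q (v.symm ⟨e1, hm1⟩) := by
      have hu : u (v.symm ⟨e1, hm1⟩) = tipv G e1 := by
        show tipv G ((v (v.symm ⟨e1, hm1⟩) : {x // x ∈ s}) : G.E) = tipv G e1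
        rw [Equiv.apply_symm_apply]
      intro hcon
      have hcon' : Side G f false (tipv G e1) := by rw [← hu]; exact hcon
      exact side_disjoint hG htree hcon' hs1
    have hcc := cyclic_changes Q _ _ hQ0 hQ1
    have hsum : ∑ i : ZMod p, (if (Side G f false (u i) ↔ Side G f false (u (i + 1)))
        then (0:ℝ) else G.ℓ f) =
        ((Finset.univ.filter fun i : ZMod p => ¬ (Q i ↔ Q (i + 1))).card : ℝ) * G.ℓ f := by
      rw [Finset.sum_ite]
      rw [Finset.sum_const_zero, Finset.sum_const, zero_add, nsmul_eq_mul]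
    rw [hsum]
    have hle : (2:ℝ) ≤ ((Finset.univ.filter fun i : ZMod p => ¬ (Q i ↔ Q (i + 1))).card : ℝ) := by
      exact_mod_cast hcc
    have := (G.ℓ_pos f).le
    nlinarith
  have hsum2 : ∑ i : ZMod p, Dv G (u i) (u (i + 1)) ≤ (p : ℝ) * G.diam := by
    calc ∑ i : ZMod p, Dv G (u i) (u (i + 1)) ≤ ∑ _i : ZMod p, G.diam :=
          Finset.sum_le_sum fun i _ => hdiam i
      _ = (p : ℝ) * G.diam := by
          rw [Finset.sum_const, nsmul_eq_mul, Finset.card_univ, ZMod.card]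
  have hppos : (0:ℝ) < (p : ℝ) := by
    have : 0 < p := by omega
    exact_mod_cast this
  rw [div_le_iff₀ hppos]
  calc 2 * G.totalLength ≤ ∑ i : ZMod p, Dv G (u i) (u (i + 1)) := hmain
    _ ≤ (p : ℝ) * G.diam := hsum2
    _ = G.diam * (p : ℝ) := mul_comm _ _

end
end

section
/- Let Γ^{δ'} be a finite, compact, connected metric graph of total length L(Γ) with δ' conditions of strengths α'_m ≠ 0 at its vertices v_1, …, v_{|V|}. Then the lowest eigenvalue satisfies λ₁(Γ^{δ'}) ≤ (1/L(Γ)) · Σ_{m=1}^{|V|} d_{v_m}² / α'_m, where d_{v_m} is the degree of the vertex v_m. -/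
noncomputable section
open scoped Classical
open MeasureTheory Finset

/-! ### Auxiliary lemmas -/

section AuxProofs

open Set

lemma cs_aux' {μ : MeasureTheory.Measure ℝ} [MeasureTheory.IsFiniteMeasure μ] (h : ℝ → ℝ)
    (h1 : MeasureTheory.Integrable h μ)
    (h2 : MeasureTheory.Integrable (fun x => h x ^ 2) μ) :
    (∫ x, h x ∂μ) ^ 2 ≤ (μ Set.univ).toReal * ∫ x, h x ^ 2 ∂μ := by
  set m : ℝ := (μ Set.univ).toReal with hm
  have hm0 : 0 ≤ m := ENNReal.toReal_nonneg
  rcases eq_or_lt_of_le hm0 with h0 | hpos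
  · have hz : μ = 0 := by
      have := (ENNReal.toReal_eq_zero_iff _).mp h0.symm
      rcases this with h' | h'
      · exact MeasureTheory.Measure.measure_univ_eq_zero.mp h'
      · exact absurd h' (measure_ne_top μ _)
    simp [hz]
  · set c : ℝ := (∫ x, h x ∂μ) / m with hc
    have key : 0 ≤ ∫ x, (h x - c) ^ 2 ∂μ := integral_nonneg fun x => sq_nonneg _
    have A : MeasureTheory.Integrable (fun x => h x ^ 2 - 2 * c * h x) μ :=
      h2.sub (h1.const_mul _)
    have expand : ∫ x, (h x - c) ^ 2 ∂μ
        = (∫ x, h x ^ 2 ∂μ) - 2 * c * (∫ x, h x ∂μ) + c ^ 2 * m := by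
      have he : (fun x => (h x - c) ^ 2) = fun x => (h x ^ 2 - 2 * c * h x) + c ^ 2 := by
        funext x; ring
      rw [he, integral_add A (integrable_const _),
        integral_sub h2 (h1.const_mul _), integral_const_mul, integral_const, measureReal_def, ← hm, smul_eq_mul]
      ring
    have hce : c * m = ∫ x, h x ∂μ := by rw [hc, div_mul_cancel₀ _ hpos.ne']
    nlinarith [key, expand, sq_nonneg c]

lemma vol_Ioc_restrict' (a b : ℝ) (hab : a ≤ b) :
    ((volume.restrict (Set.Ioc a b)) Set.univ).toReal = b - a := by
  rw [Measure.restrict_apply_univ, Real.volume_Ioc, ENNReal.toReal_ofReal (by linarith)]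

lemma vol_Ioc' (a b : ℝ) (hab : a ≤ b) :
    ((volume : Measure ℝ) (Set.Ioc a b)).toReal = b - a := by
  rw [Real.volume_Ioc, ENNReal.toReal_ofReal (by linarith)]

lemma trace_bound' (f g : ℝ → ℂ) (L δ : ℝ) (hδ : 0 < δ) (hδL : δ ≤ L)
    (hfg : IsH1Deriv f g L) :
    ‖f 0‖ ^ 2 + ‖f L‖ ^ 2 ≤
      (4 / δ) * (∫ t in Set.Ioc (0:ℝ) L, ‖f t‖ ^ 2) +
        4 * δ * (∫ t in Set.Ioc (0:ℝ) L, ‖g t‖ ^ 2) := by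
  obtain ⟨hg2, hrep⟩ := hfg
  have hL : 0 < L := hδ.trans_le hδL
  have hgInt : IntegrableOn g (Set.Ioc 0 L) := hg2.integrable one_le_two
  have hgn : IntegrableOn (fun t => ‖g t‖) (Set.Ioc 0 L) := hgInt.norm
  have hg2Int : IntegrableOn (fun t => ‖g t‖ ^ 2) (Set.Ioc 0 L) := by
    have := hg2.integrable_norm_rpow two_ne_zero ENNReal.ofNat_ne_top
    simp [ENNReal.toReal_ofNat, Real.rpow_natCast] at this; exact this
  set G : ℝ := ∫ t in Set.Ioc (0:ℝ) L, ‖g t‖ ^ 2 with hGdef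
  have hG0 : 0 ≤ G := integral_nonneg fun t => sq_nonneg _
  have hgIcc : IntegrableOn g (Set.Icc 0 L) :=
    (integrableOn_Icc_iff_integrableOn_Ioc).mpr hgInt
  have hfc : ContinuousOn f (Set.Icc 0 L) := by
    have hprim : ContinuousOn (fun x => ∫ t in Set.Ioc (0:ℝ) x, g t) (Set.Icc 0 L) :=
      intervalIntegral.continuousOn_primitive hgIcc
    have h2 : ContinuousOn (fun x => f 0 + ∫ t in Set.Ioc (0:ℝ) x, g t) (Set.Icc 0 L) :=
      continuousOn_const.add hprim
    exact h2.congr fun x hx => by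
      rw [hrep x hx, intervalIntegral.integral_of_le hx.1]
  have hfIntIcc : IntegrableOn (fun t => ‖f t‖ ^ 2) (Set.Icc 0 L) :=
    ((hfc.norm).pow 2).integrableOn_compact isCompact_Icc
  have hfInt : IntegrableOn (fun t => ‖f t‖ ^ 2) (Set.Ioc 0 L) :=
    hfIntIcc.mono_set Set.Ioc_subset_Icc_self
  set N : ℝ := ∫ t in Set.Ioc (0:ℝ) L, ‖f t‖ ^ 2 with hNdef
  have hN0 : 0 ≤ N := integral_nonneg fun t => sq_nonneg _
  have hgi : IntervalIntegrable g volume 0 L :=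
    (intervalIntegrable_iff_integrableOn_Ioc_of_le hL.le).mpr hgInt
  have endpoint : ∀ (a b : ℝ), 0 ≤ a → a + δ = b → b ≤ L →
      ∀ z : ℂ, (∀ x ∈ Set.Ioc a b, ‖z‖ ≤ ‖f x‖ + ∫ t in Set.Ioc a b, ‖g t‖) →
      ‖z‖ ^ 2 ≤ (2 / δ) * N + 2 * δ * G := by
    intro a b ha hab hbL z hz
    have hab' : a ≤ b := by linarith
    have hsub : Set.Ioc a b ⊆ Set.Ioc 0 L := Set.Ioc_subset_Ioc (by linarith) hbL
    have hgnab : IntegrableOn (fun t => ‖g t‖) (Set.Ioc a b) := hgn.mono_set hsub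
    have hg2ab : IntegrableOn (fun t => ‖g t‖ ^ 2) (Set.Ioc a b) := hg2Int.mono_set hsub
    set A : ℝ := ∫ t in Set.Ioc a b, ‖g t‖ with hAdef
    have hA2 : A ^ 2 ≤ δ * G := by
      have h1 := cs_aux' (μ := volume.restrict (Set.Ioc a b)) (fun t => ‖g t‖) hgnab hg2ab
      rw [vol_Ioc_restrict' a b hab'] at h1
      have h2 : (∫ t in Set.Ioc a b, ‖g t‖ ^ 2) ≤ G :=
        setIntegral_mono_set hg2Int (Filter.Eventually.of_forall fun t => sq_nonneg _)
          hsub.eventuallyLE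
      calc A ^ 2 ≤ (b - a) * ∫ t in Set.Ioc a b, ‖g t‖ ^ 2 := h1
        _ ≤ δ * G := by
          have hba : b - a = δ := by linarith
          rw [hba]
          exact mul_le_mul_of_nonneg_left h2 hδ.le
    have hfab : IntegrableOn (fun t => ‖f t‖ ^ 2) (Set.Ioc a b) := hfInt.mono_set hsub
    have hpt : ∀ x ∈ Set.Ioc a b, ‖z‖ ^ 2 ≤ 2 * ‖f x‖ ^ 2 + 2 * (δ * G) := by
      intro x hx
      have h1 := hz x hx
      have hA0 : 0 ≤ A := integral_nonneg fun t => norm_nonneg _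
      nlinarith [hA2, norm_nonneg z, norm_nonneg (f x), sq_nonneg (‖f x‖ - A), hA0]
    have key : ∫ _x in Set.Ioc a b, ‖z‖ ^ 2 ≤
        ∫ x in Set.Ioc a b, (2 * ‖f x‖ ^ 2 + 2 * (δ * G)) :=
      setIntegral_mono_on (integrable_const _) ((hfab.const_mul 2).add (integrable_const _))
        measurableSet_Ioc hpt
    have lhs_eq : ∫ _x in Set.Ioc a b, ‖z‖ ^ 2 = δ * ‖z‖ ^ 2 := by
      rw [setIntegral_const, measureReal_def, vol_Ioc' a b hab', smul_eq_mul]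
      congr 1; linarith
    have rhs_eq : ∫ x in Set.Ioc a b, (2 * ‖f x‖ ^ 2 + 2 * (δ * G))
        = 2 * (∫ x in Set.Ioc a b, ‖f x‖ ^ 2) + 2 * (δ * G) * δ := by
      rw [integral_add (hfab.const_mul 2) (integrable_const _), integral_const_mul,
        setIntegral_const, measureReal_def, vol_Ioc' a b hab', smul_eq_mul]
      have hba : b - a = δ := by linarith
      rw [hba]; ring
    have hfle : (∫ x in Set.Ioc a b, ‖f x‖ ^ 2) ≤ N :=
      setIntegral_mono_set hfInt (Filter.Eventually.of_forall fun t => sq_nonneg _)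
        hsub.eventuallyLE
    rw [lhs_eq, rhs_eq] at key
    have h2N : 2 / δ * N * δ = 2 * N := by field_simp
    nlinarith [key, hfle, hδ, h2N, hG0]
  have h0 : ‖f 0‖ ^ 2 ≤ (2 / δ) * N + 2 * δ * G := by
    refine endpoint 0 δ le_rfl (by ring) hδL (f 0) ?_
    intro x hx
    have hxIcc : x ∈ Set.Icc 0 L := ⟨hx.1.le, hx.2.trans hδL⟩
    have h1 : f 0 = f x - ∫ t in (0:ℝ)..x, g t := by rw [hrep x hxIcc]; ring
    have h2 : ‖f 0‖ ≤ ‖f x‖ + ‖∫ t in (0:ℝ)..x, g t‖ := by rw [h1]; exact norm_sub_le _ _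
    have h3 : ‖∫ t in (0:ℝ)..x, g t‖ ≤ ∫ t in Set.Ioc 0 δ, ‖g t‖ := by
      rw [intervalIntegral.integral_of_le hx.1.le]
      calc ‖∫ t in Set.Ioc 0 x, g t‖ ≤ ∫ t in Set.Ioc 0 x, ‖g t‖ :=
            norm_integral_le_integral_norm _
        _ ≤ ∫ t in Set.Ioc 0 δ, ‖g t‖ :=
            setIntegral_mono_set (hgn.mono_set (Set.Ioc_subset_Ioc_right hδL))
              (Filter.Eventually.of_forall fun t => norm_nonneg _)
              (Set.Ioc_subset_Ioc_right hx.2).eventuallyLE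
    linarith
  have hLbd : ‖f L‖ ^ 2 ≤ (2 / δ) * N + 2 * δ * G := by
    refine endpoint (L - δ) L (by linarith) (by ring) le_rfl (f L) ?_
    intro x hx
    have hxIcc : x ∈ Set.Icc 0 L := ⟨by linarith [hx.1, hδL], hx.2⟩
    have hgix : IntervalIntegrable g volume 0 x := by
      refine hgi.mono_set ?_
      rw [Set.uIcc_of_le hxIcc.1, Set.uIcc_of_le hL.le]
      exact Set.Icc_subset_Icc le_rfl hxIcc.2
    have h1 : f L - f x = ∫ t in x..L, g t := by
      rw [hrep L ⟨hL.le, le_refl L⟩, hrep x hxIcc]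
      rw [← intervalIntegral.integral_interval_sub_left hgi hgix]
      ring
    have hfL' : f L = f x + ∫ t in x..L, g t := by rw [← h1]; ring
    have h2 : ‖f L‖ ≤ ‖f x‖ + ‖∫ t in x..L, g t‖ := by
      rw [hfL']; exact norm_add_le _ _
    have h3 : ‖∫ t in x..L, g t‖ ≤ ∫ t in Set.Ioc (L - δ) L, ‖g t‖ := by
      rw [intervalIntegral.integral_of_le hx.2]
      calc ‖∫ t in Set.Ioc x L, g t‖ ≤ ∫ t in Set.Ioc x L, ‖g t‖ :=
            norm_integral_le_integral_norm _
        _ ≤ ∫ t in Set.Ioc (L - δ) L, ‖g t‖ :=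
            setIntegral_mono_set
              (hgn.mono_set (Set.Ioc_subset_Ioc (by linarith) le_rfl))
              (Filter.Eventually.of_forall fun t => norm_nonneg _)
              (Set.Ioc_subset_Ioc_left hx.1.le).eventuallyLE
    linarith
  have e1 : 4 / δ * N = 2 / δ * N + 2 / δ * N := by ring
  have e2 : 4 * δ * G = 2 * δ * G + 2 * δ * G := by ring
  linarith

lemma isH1_const' (c : ℂ) (L : ℝ) : IsH1 (fun _ => c) L := by
  refine ⟨fun _ => 0, ?_, ?_⟩
  · exact MeasureTheory.memLp_const 0
  · intro x hx; simp

lemma edgeEnergy_nonneg' (f : ℝ → ℂ) (L : ℝ) (hL : 0 ≤ L) (h : IsH1 f L) :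
    0 ≤ edgeEnergy f L := by
  obtain ⟨g, hg⟩ := h
  refine le_csInf ⟨_, g, hg, rfl⟩ ?_
  rintro r ⟨g', hg', rfl⟩
  exact intervalIntegral.integral_nonneg hL fun t _ => sq_nonneg _

lemma edgeEnergy_const' (c : ℂ) (L : ℝ) (hL : 0 ≤ L) : edgeEnergy (fun _ => c) L = 0 := by
  have mem : (0:ℝ) ∈ { r | ∃ g, IsH1Deriv (fun _ => c) g L ∧
      r = ∫ t in (0:ℝ)..L, ‖g t‖ ^ 2 } := by
    refine ⟨fun _ => 0, ⟨MeasureTheory.memLp_const 0, fun x hx => by simp⟩, by simp⟩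
  have hlb : ∀ r ∈ { r | ∃ g, IsH1Deriv (fun _ => c) g L ∧
      r = ∫ t in (0:ℝ)..L, ‖g t‖ ^ 2 }, (0:ℝ) ≤ r := by
    rintro r ⟨g, hg, rfl⟩
    exact intervalIntegral.integral_nonneg hL fun t _ => sq_nonneg _
  exact le_antisymm (csInf_le ⟨0, hlb⟩ mem) (le_csInf ⟨0, mem⟩ hlb)

lemma edgeEnergy_trace' (f : ℝ → ℂ) (L δ : ℝ) (hδ : 0 < δ) (hδL : δ ≤ L) (h : IsH1 f L) :
    ‖f 0‖ ^ 2 + ‖f L‖ ^ 2 ≤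
      (4 / δ) * (∫ t in (0:ℝ)..L, ‖f t‖ ^ 2) + 4 * δ * edgeEnergy f L := by
  have hL : 0 < L := hδ.trans_le hδL
  obtain ⟨g0, hg0⟩ := h
  set N : ℝ := ∫ t in (0:ℝ)..L, ‖f t‖ ^ 2 with hN
  have key : (‖f 0‖ ^ 2 + ‖f L‖ ^ 2 - (4 / δ) * N) / (4 * δ) ≤ edgeEnergy f L := by
    refine le_csInf ⟨_, g0, hg0, rfl⟩ ?_
    rintro r ⟨g, hg, rfl⟩
    have ht := trace_bound' f g L δ hδ hδL hg
    rw [← intervalIntegral.integral_of_le hL.le, ← intervalIntegral.integral_of_le hL.le] at ht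
    rw [div_le_iff₀ (by positivity)]
    nlinarith [ht]
  rw [div_le_iff₀ (by positivity : (0:ℝ) < 4 * δ)] at key
  nlinarith [key]

end AuxProofs
section LowerBound

lemma rayleigh_lower (G : MetricGraph) (α : G.V → ℝ) (hα : ∀ v, α v ≠ 0) :
    ∃ C : ℝ, 0 ≤ C ∧ ∀ ψ ∈ G.domain (fun v => delta'Cond (G.Endpts v) (α v)),
      -C ≤ G.form (fun v => delta'Cond (G.Endpts v) (α v)) ψ / G.normSq ψ := by
  classical
  set K : ℝ := (∑ v, (G.degree v : ℝ) / |α v|) + 1 with hKdef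
  have hKsum : (0:ℝ) ≤ ∑ v, (G.degree v : ℝ) / |α v| :=
    Finset.sum_nonneg fun v _ => by positivity
  have hKpos : 0 < K := by rw [hKdef]; linarith
  set δe : G.E → ℝ := fun e => min (G.ℓ e) (1 / (4 * K)) with hδdef
  have hδpos : ∀ e, 0 < δe e := fun e =>
    lt_min (G.ℓ_pos e) (by apply div_pos one_pos; linarith)
  have hδle : ∀ e, δe e ≤ G.ℓ e := fun e => min_le_left _ _
  have hδK : ∀ e, 4 * K * δe e ≤ 1 := by
    intro e
    have h1 : δe e ≤ 1 / (4 * K) := min_le_right _ _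
    have h2 : 4 * K * δe e ≤ 4 * K * (1 / (4 * K)) :=
      mul_le_mul_of_nonneg_left h1 (by linarith)
    have h3 : 4 * K * (1 / (4 * K)) = 1 := by field_simp
    exact h3 ▸ h2
  set C : ℝ := ∑ e, 4 * K / δe e with hCdef
  have hC0 : 0 ≤ C := Finset.sum_nonneg fun e _ =>
    div_nonneg (by linarith : (0:ℝ) ≤ 4 * K) (hδpos e).le
  refine ⟨C, hC0, ?_⟩
  intro ψ hψ
  obtain ⟨hH1, _hW⟩ := hψ
  set Ne : G.E → ℝ := fun e => ∫ t in (0:ℝ)..(G.ℓ e), ‖ψ e t‖ ^ 2 with hNedef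
  have hNe0 : ∀ e, 0 ≤ Ne e := fun e =>
    intervalIntegral.integral_nonneg (G.ℓ_pos e).le fun t _ => sq_nonneg _
  have hNormSq : G.normSq ψ = ∑ e, Ne e := rfl
  have hN0 : 0 ≤ G.normSq ψ := by
    rw [hNormSq]; exact Finset.sum_nonneg fun e _ => hNe0 e
  set Ee : G.E → ℝ := fun e => edgeEnergy (ψ e) (G.ℓ e) with hEedef
  have hEe0 : ∀ e, 0 ≤ Ee e := fun e =>
    edgeEnergy_nonneg' (ψ e) (G.ℓ e) (G.ℓ_pos e).le (hH1 e)
  have trace : ∀ e, ‖ψ e 0‖ ^ 2 + ‖ψ e (G.ℓ e)‖ ^ 2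
      ≤ (4 / δe e) * Ne e + 4 * δe e * Ee e := fun e =>
    edgeEnergy_trace' (ψ e) (G.ℓ e) (δe e) (hδpos e) (hδle e) (hH1 e)
  -- bound each vertex term
  have hQ : ∀ v : G.V, -(K * ∑ p : G.Endpts v, ‖G.endVal ψ p.1‖ ^ 2)
      ≤ (1 / α v) * ‖∑ p : G.Endpts v, G.vals ψ v p‖ ^ 2 := by
    intro v
    set T : ℝ := ∑ p : G.Endpts v, ‖G.endVal ψ p.1‖ ^ 2 with hTdef
    have hT0 : 0 ≤ T := Finset.sum_nonneg fun p _ => sq_nonneg _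
    set S : ℝ := ‖∑ p : G.Endpts v, G.vals ψ v p‖ ^ 2 with hSdef
    have hS0 : 0 ≤ S := sq_nonneg _
    have hCS : S ≤ (G.degree v : ℝ) * T := by
      have h1 : ‖∑ p : G.Endpts v, G.vals ψ v p‖ ≤ ∑ p : G.Endpts v, ‖G.vals ψ v p‖ :=
        norm_sum_le _ _
      have h2 : (∑ p : G.Endpts v, ‖G.vals ψ v p‖) ^ 2
          ≤ (((Finset.univ : Finset (G.Endpts v)).card : ℕ) : ℝ)
            * ∑ p : G.Endpts v, ‖G.vals ψ v p‖ ^ 2 :=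
        sq_sum_le_card_mul_sum_sq
      have h3 : (((Finset.univ : Finset (G.Endpts v)).card : ℕ) : ℝ) = (G.degree v : ℝ) := by
        rw [Finset.card_univ]; rfl
      have h4 : (∑ p : G.Endpts v, ‖G.vals ψ v p‖ ^ 2) = T := rfl
      have h5 : S ≤ (∑ p : G.Endpts v, ‖G.vals ψ v p‖) ^ 2 := by
        rw [hSdef]
        exact pow_le_pow_left₀ (norm_nonneg _) h1 2
      rw [h3, h4] at h2
      linarith
    have habs : |1 / α v| = 1 / |α v| := by rw [abs_div, abs_one]
    have hd : (G.degree v : ℝ) / |α v| ≤ K := by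
      have := Finset.single_le_sum (f := fun w => (G.degree w : ℝ) / |α w|)
        (fun w _ => by positivity) (Finset.mem_univ v)
      rw [hKdef]; linarith
    have hαpos : 0 < |α v| := abs_pos.mpr (hα v)
    calc -(K * T) ≤ -(((G.degree v : ℝ) / |α v|) * T) := by
          apply neg_le_neg
          exact mul_le_mul_of_nonneg_right hd hT0
      _ ≤ -((1 / |α v|) * S) := by
          apply neg_le_neg
          have : (1 / |α v|) * S ≤ (1 / |α v|) * ((G.degree v : ℝ) * T) :=
            mul_le_mul_of_nonneg_left hCS (by positivity)
          calc (1 / |α v|) * S ≤ (1 / |α v|) * ((G.degree v : ℝ) * T) := this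
            _ = ((G.degree v : ℝ) / |α v|) * T := by ring
      _ = (-|1 / α v|) * S := by rw [habs]; ring
      _ ≤ (1 / α v) * S := mul_le_mul_of_nonneg_right (neg_abs_le _) hS0
  -- sum of vertex terms
  have hsum_fib : ∑ v, ∑ p : G.Endpts v, ‖G.endVal ψ p.1‖ ^ 2
      = ∑ q : G.E × Bool, ‖G.endVal ψ q‖ ^ 2 :=
    Fintype.sum_fiberwise G.ends (fun q => ‖G.endVal ψ q‖ ^ 2)
  have hsum_prod : ∑ q : G.E × Bool, ‖G.endVal ψ q‖ ^ 2
      = ∑ e, (‖ψ e 0‖ ^ 2 + ‖ψ e (G.ℓ e)‖ ^ 2) := by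
    rw [Fintype.sum_prod_type]
    refine Finset.sum_congr rfl fun e _ => ?_
    rw [Fintype.sum_bool]
    simp [MetricGraph.endVal]
    ring
  have hvert : -(K * ∑ e, ((4 / δe e) * Ne e + 4 * δe e * Ee e))
      ≤ ∑ v, (1 / α v) * ‖∑ p : G.Endpts v, G.vals ψ v p‖ ^ 2 := by
    have s1 : ∑ v, -(K * ∑ p : G.Endpts v, ‖G.endVal ψ p.1‖ ^ 2)
        ≤ ∑ v, (1 / α v) * ‖∑ p : G.Endpts v, G.vals ψ v p‖ ^ 2 :=
      Finset.sum_le_sum fun v _ => hQ v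
    have s2 : ∑ v, -(K * ∑ p : G.Endpts v, ‖G.endVal ψ p.1‖ ^ 2)
        = -(K * ∑ e, (‖ψ e 0‖ ^ 2 + ‖ψ e (G.ℓ e)‖ ^ 2)) := by
      rw [← hsum_prod, ← hsum_fib, Finset.mul_sum, ← Finset.sum_neg_distrib]
    have s3 : ∑ e, (‖ψ e 0‖ ^ 2 + ‖ψ e (G.ℓ e)‖ ^ 2)
        ≤ ∑ e, ((4 / δe e) * Ne e + 4 * δe e * Ee e) :=
      Finset.sum_le_sum fun e _ => trace e
    have s4 : -(K * ∑ e, ((4 / δe e) * Ne e + 4 * δe e * Ee e))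
        ≤ -(K * ∑ e, (‖ψ e 0‖ ^ 2 + ‖ψ e (G.ℓ e)‖ ^ 2)) :=
      neg_le_neg (mul_le_mul_of_nonneg_left s3 hKpos.le)
    calc -(K * ∑ e, ((4 / δe e) * Ne e + 4 * δe e * Ee e))
        ≤ -(K * ∑ e, (‖ψ e 0‖ ^ 2 + ‖ψ e (G.ℓ e)‖ ^ 2)) := s4
      _ = ∑ v, -(K * ∑ p : G.Endpts v, ‖G.endVal ψ p.1‖ ^ 2) := s2.symm
      _ ≤ ∑ v, (1 / α v) * ‖∑ p : G.Endpts v, G.vals ψ v p‖ ^ 2 := s1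
  -- assemble the form bound
  have hformeq : G.form (fun v => delta'Cond (G.Endpts v) (α v)) ψ
      = (∑ e, Ee e) + ∑ v, (1 / α v) * ‖∑ p : G.Endpts v, G.vals ψ v p‖ ^ 2 := rfl
  have hdist : K * ∑ e, ((4 / δe e) * Ne e + 4 * δe e * Ee e)
      = (∑ e, (4 * K / δe e) * Ne e) + ∑ e, (4 * K * δe e) * Ee e := by
    rw [Finset.mul_sum, ← Finset.sum_add_distrib]
    refine Finset.sum_congr rfl fun e _ => ?_
    field_simp
  have hEbd : ∑ e, (4 * K * δe e) * Ee e ≤ ∑ e, Ee e :=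
    Finset.sum_le_sum fun e _ => by
      have := mul_le_mul_of_nonneg_right (hδK e) (hEe0 e)
      linarith [this]
  have hNbd : ∑ e, (4 * K / δe e) * Ne e ≤ C * G.normSq ψ := by
    rw [hNormSq, Finset.mul_sum]
    refine Finset.sum_le_sum fun e _ => ?_
    refine mul_le_mul_of_nonneg_right ?_ (hNe0 e)
    rw [hCdef]
    exact Finset.single_le_sum (f := fun e' => 4 * K / δe e')
      (fun e' _ => div_nonneg (by linarith : (0:ℝ) ≤ 4 * K) (hδpos e').le)
      (Finset.mem_univ e)
  have hformbd : -(C * G.normSq ψ) ≤ G.form (fun v => delta'Cond (G.Endpts v) (α v)) ψ := by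
    rw [hformeq]
    have := hvert
    rw [hdist] at this
    linarith
  -- conclude for the quotient
  rcases eq_or_lt_of_le hN0 with h0 | hpos
  · rw [← h0, div_zero]
    linarith
  · rw [le_div_iff₀ hpos]
    linarith [hformbd]

end LowerBound
/-- Upper bound for the lowest eigenvalue of the δ′ Laplacian via the
constant test function: `λ₁ ≤ (1/L) Σ_v d_v²/α'_v`. -/
theorem delta'_ground_state_upper_bound
    (G : MetricGraph) (hG : G.Connected) (α : G.V → ℝ) (hα : ∀ v, α v ≠ 0) :
    G.lambda (fun v => delta'Cond (G.Endpts v) (α v)) 1 ≤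
      (1 / G.totalLength) * ∑ v, (G.degree v : ℝ) ^ 2 / α v := by
  classical
  set vc : G.VertexConds := fun v => delta'Cond (G.Endpts v) (α v) with hvc
  set B : ℝ := (1 / G.totalLength) * ∑ v, (G.degree v : ℝ) ^ 2 / α v with hB
  have hLpos : 0 < G.totalLength :=
    Finset.sum_pos (fun e _ => G.ℓ_pos e) Finset.univ_nonempty
  -- the constant test function
  set one : G.E → ℝ → ℂ := fun _ _ => 1 with hone
  have hone_ne : one ≠ 0 := fun h =>
    one_ne_zero (congrFun (congrFun h (Classical.arbitrary G.E)) 0)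
  set φ : Fin 1 → (G.E → ℝ → ℂ) := fun _ => one with hφ
  have hrange : Set.range φ = {one} := Set.range_const
  have hspan : ∀ ψ, ψ ∈ Submodule.span ℂ (Set.range φ) ↔ ∃ c : ℂ, ψ = c • one := by
    intro ψ
    rw [hrange, Submodule.mem_span_singleton]
    constructor
    · rintro ⟨c, rfl⟩; exact ⟨c, rfl⟩
    · rintro ⟨c, rfl⟩; exact ⟨c, rfl⟩
  -- pointwise description of c • one
  have hsm : ∀ (c : ℂ) (e : G.E), (c • one) e = fun _ => c := by
    intro c e; funext t; simp [hone]
  -- domain membership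
  have hdom : (Submodule.span ℂ (Set.range φ) : Set (G.E → ℝ → ℂ)) ⊆ G.domain vc := by
    intro ψ hψ
    obtain ⟨c, rfl⟩ := (hspan ψ).mp hψ
    constructor
    · intro e
      rw [hsm c e]
      exact isH1_const' c (G.ℓ e)
    · intro v
      exact Submodule.mem_top
  -- endpoint values
  have hvals : ∀ (c : ℂ) (v : G.V) (p : G.Endpts v), G.vals (c • one) v p = c := by
    intro c v p
    show G.endVal (c • one) p.1 = c
    unfold MetricGraph.endVal
    rw [hsm c p.1.1]
  -- form of c • one
  have hform : ∀ c : ℂ,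
      G.form vc (c • one) = (∑ v, (G.degree v : ℝ) ^ 2 / α v) * ‖c‖ ^ 2 := by
    intro c
    have henergy : G.energy (c • one) = 0 := by
      unfold MetricGraph.energy
      rw [Finset.sum_eq_zero]
      intro e _
      rw [hsm c e]
      exact edgeEnergy_const' c (G.ℓ e) (G.ℓ_pos e).le
    have hQ : ∀ v, (vc v).Q (G.vals (c • one) v)
        = ((G.degree v : ℝ) ^ 2 / α v) * ‖c‖ ^ 2 := by
      intro v
      show (1 / α v) * ‖∑ p : G.Endpts v, G.vals (c • one) v p‖ ^ 2 = _
      have h1 : ∑ p : G.Endpts v, G.vals (c • one) v p = (G.degree v : ℂ) * c := by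
        rw [Finset.sum_congr rfl fun p _ => hvals c v p, Finset.sum_const,
          Finset.card_univ, nsmul_eq_mul]
        rfl
      rw [h1, norm_mul, mul_pow, Complex.norm_natCast]
      ring
    unfold MetricGraph.form
    rw [henergy, zero_add, Finset.sum_congr rfl fun v _ => hQ v, ← Finset.sum_mul]
  -- norm of c • one
  have hnorm : ∀ c : ℂ, G.normSq (c • one) = G.totalLength * ‖c‖ ^ 2 := by
    intro c
    unfold MetricGraph.normSq
    have h1 : ∀ e : G.E, (∫ t in (0:ℝ)..(G.ℓ e), ‖(c • one) e t‖ ^ 2)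
        = G.ℓ e * ‖c‖ ^ 2 := by
      intro e
      rw [hsm c e]
      rw [intervalIntegral.integral_const]
      rw [smul_eq_mul, sub_zero]
    rw [Finset.sum_congr rfl fun e _ => h1 e, ← Finset.sum_mul]
    rfl
  -- Rayleigh quotient of the constants
  have hquot : ∀ c : ℂ, c ≠ 0 → G.form vc (c • one) / G.normSq (c • one) = B := by
    intro c hc
    have hcn : ‖c‖ ^ 2 ≠ 0 := pow_ne_zero 2 (norm_ne_zero_iff.mpr hc)
    rw [hform c, hnorm c, hB]
    rw [mul_comm (G.totalLength) (‖c‖ ^ 2), mul_comm ((1:ℝ) / G.totalLength) _,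
      ← div_div, mul_div_assoc, div_self hcn, mul_one, div_eq_mul_one_div]
  -- the sup set is the singleton {B}
  have hTsing : { q | ∃ ψ ∈ Submodule.span ℂ (Set.range φ), ψ ≠ 0 ∧
      q = G.form vc ψ / G.normSq ψ } = {B} := by
    apply Set.eq_singleton_iff_unique_mem.mpr
    constructor
    · refine ⟨one, ?_, hone_ne, ?_⟩
      · rw [hrange]; exact Submodule.mem_span_singleton_self one
      · have h1 : (1:ℂ) • one = one := one_smul ℂ one
        rw [← h1]
        exact (hquot 1 one_ne_zero).symm
    · rintro q ⟨ψ, hmem, hne, rfl⟩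
      obtain ⟨c, rfl⟩ := (hspan ψ).mp hmem
      have hc : c ≠ 0 := by
        rintro rfl
        exact hne (zero_smul ℂ one)
      exact hquot c hc
  -- linear independence
  have hli : LinearIndependent ℂ φ := LinearIndependent.of_subsingleton (0 : Fin 1) hone_ne
  -- membership of B in the eigenvalue set
  have hmem : B ∈ { r | ∃ φ' : Fin 1 → (G.E → ℝ → ℂ),
      LinearIndependent ℂ φ' ∧
      (Submodule.span ℂ (Set.range φ') : Set (G.E → ℝ → ℂ)) ⊆ G.domain vc ∧
      r = sSup { q | ∃ ψ ∈ Submodule.span ℂ (Set.range φ'), ψ ≠ 0 ∧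
        q = G.form vc ψ / G.normSq ψ } } := by
    exact ⟨φ, hli, hdom, by rw [hTsing, csSup_singleton]⟩
  -- boundedness from below
  obtain ⟨C, hC0, hray⟩ := rayleigh_lower G α hα
  have hbdd : BddBelow { r | ∃ φ' : Fin 1 → (G.E → ℝ → ℂ),
      LinearIndependent ℂ φ' ∧
      (Submodule.span ℂ (Set.range φ') : Set (G.E → ℝ → ℂ)) ⊆ G.domain vc ∧
      r = sSup { q | ∃ ψ ∈ Submodule.span ℂ (Set.range φ'), ψ ≠ 0 ∧
        q = G.form vc ψ / G.normSq ψ } } := by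
    refine ⟨-C, ?_⟩
    rintro r ⟨φ', hli', hsub', rfl⟩
    set ψ0 := φ' 0 with hψ0
    have hψ0mem : ψ0 ∈ Submodule.span ℂ (Set.range φ') :=
      Submodule.subset_span (Set.mem_range_self 0)
    have hψ0dom : ψ0 ∈ G.domain vc := hsub' hψ0mem
    have hψ0ne : ψ0 ≠ 0 := hli'.ne_zero 0
    have hq0 : G.form vc ψ0 / G.normSq ψ0 ∈
        { q | ∃ ψ ∈ Submodule.span ℂ (Set.range φ'), ψ ≠ 0 ∧
          q = G.form vc ψ / G.normSq ψ } := ⟨ψ0, hψ0mem, hψ0ne, rfl⟩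
    by_cases hb : BddAbove { q | ∃ ψ ∈ Submodule.span ℂ (Set.range φ'), ψ ≠ 0 ∧
        q = G.form vc ψ / G.normSq ψ }
    · exact le_trans (hray ψ0 hψ0dom) (le_csSup hb hq0)
    · rw [Real.sSup_of_not_bddAbove hb]
      linarith
  exact csInf_le hbdd hmem

end
end
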